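/- arXiv:1512.08853 — 11 statements merged into one kernel-verified Lean document; each statement's English description precedes it below -/
import Mathlib

section
/- For all natural numbers m1, m2 not both zero, (m1 + m2) divides m1 * m2 * binom(2*m1, m1) * binom(2*m2, m2). -/
open Nat

/-- The key factorial identity behind `4·S(m,n) = S(m,n+1) + S(m+1,n)` for the
super Catalan numbers, written without subtraction. -/
private lemma fact_id (m n : ℕ) :
    (2*m)! * (2*(n+1))! * ((m ! * n ! * (m+n)!) * ((m+1)! * n ! * ((m+1)+n)!))
      + (2*(m+1))! * (2*n)! * ((m ! * n ! * (m+n)!) * (m ! * (n+1)! * (m+(n+1))!))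
    = 4 * ((2*m)! * (2*n)!) * (((m+1)! * n ! * ((m+1)+n)!) * (m ! * (n+1)! * (m+(n+1))!)) := by
  have h1 : 2*(n+1) = (2*n+1)+1 := by ring
  have h2 : 2*(m+1) = (2*m+1)+1 := by ring
  have h3 : m+1+n = (m+n)+1 := by ring
  have h4 : m+(n+1) = (m+n)+1 := by ring
  rw [h1, h2, h3, h4]
  simp only [Nat.factorial_succ]
  ring

/-- Integrality of super Catalan numbers. -/
private lemma superCatalan : ∀ n m : ℕ, m ! * n ! * (m+n)! ∣ (2*m)! * (2*n)! := by
  intro n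
  induction n with
  | zero =>
      intro m
      have h : (2*m).choose m * m ! * m ! = (2*m)! := by
        have := Nat.choose_mul_factorial_mul_factorial (show m ≤ 2*m by omega)
        simpa [show 2*m - m = m by omega] using this
      refine ⟨(2*m).choose m, ?_⟩
      simp only [Nat.factorial_zero, Nat.add_zero, Nat.mul_zero]
      rw [← h]; ring
  | succ n ih =>
      intro m
      obtain ⟨s, hs⟩ := ih m
      obtain ⟨t, ht⟩ := ih (m+1)
      have key := fact_id m n
      rw [hs, ht] at key
      -- cancel the common positive factor
      have hpos : 0 < (m ! * n ! * (m+n)!) * ((m+1)! * n ! * ((m+1)+n)!) := by positivity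
      have h5 : ((2*m)! * (2*(n+1))! + t * (m ! * (n+1)! * (m+(n+1))!))
            * ((m ! * n ! * (m+n)!) * ((m+1)! * n ! * ((m+1)+n)!))
          = (4 * s * (m ! * (n+1)! * (m+(n+1))!))
            * ((m ! * n ! * (m+n)!) * ((m+1)! * n ! * ((m+1)+n)!)) := by
        ring_nf
        ring_nf at key
        linarith
      have h6 := Nat.eq_of_mul_eq_mul_right hpos h5
      have h7 : (m ! * (n+1)! * (m+(n+1))!) ∣
          t * (m ! * (n+1)! * (m+(n+1))!) + (2*m)! * (2*(n+1))! := by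
        rw [(Nat.add_comm (t * (m ! * (n+1)! * (m+(n+1))!)) ((2*m)! * (2*(n+1))!)).trans h6]
        exact ⟨4*s, by ring⟩
      have h8 := (Nat.dvd_add_right (dvd_mul_left _ t)).mp h7
      simpa [add_comm 1 n] using h8

theorem annulus_traversing_even_integrality (m1 m2 : ℕ) (h : ¬ (m1 = 0 ∧ m2 = 0)) :
    (m1 + m2) ∣ m1 * m2 * (2 * m1).choose m1 * (2 * m2).choose m2 := by
  rcases Nat.eq_zero_or_pos m1 with h1 | h1
  · simp [h1]
  rcases Nat.eq_zero_or_pos m2 with h2 | h2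
  · simp [h2]
  obtain ⟨S, hS⟩ := superCatalan m2 m1
  have e1 : (2*m1).choose m1 * m1 ! * m1 ! = (2*m1)! := by
    have := Nat.choose_mul_factorial_mul_factorial (show m1 ≤ 2*m1 by omega)
    simpa [show 2*m1 - m1 = m1 by omega] using this
  have e2 : (2*m2).choose m2 * m2 ! * m2 ! = (2*m2)! := by
    have := Nat.choose_mul_factorial_mul_factorial (show m2 ≤ 2*m2 by omega)
    simpa [show 2*m2 - m2 = m2 by omega] using this
  have e3 : (m1+m2).choose m1 * m1 ! * m2 ! = (m1+m2)! := by
    have := Nat.choose_mul_factorial_mul_factorial (Nat.le_add_right m1 m2)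
    simpa using this
  have hpos : 0 < m1 ! * m1 ! * m2 ! * m2 ! := by positivity
  have h5 : ((2*m1).choose m1 * (2*m2).choose m2) * (m1 ! * m1 ! * m2 ! * m2 !)
      = ((m1+m2).choose m1 * S) * (m1 ! * m1 ! * m2 ! * m2 !) := by
    calc ((2*m1).choose m1 * (2*m2).choose m2) * (m1 ! * m1 ! * m2 ! * m2 !)
        = ((2*m1).choose m1 * m1 ! * m1 !) * ((2*m2).choose m2 * m2 ! * m2 !) := by ring
      _ = (2*m1)! * (2*m2)! := by rw [e1, e2]
      _ = m1 ! * m2 ! * (m1+m2)! * S := hS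
      _ = m1 ! * m2 ! * ((m1+m2).choose m1 * m1 ! * m2 !) * S := by rw [e3]
      _ = ((m1+m2).choose m1 * S) * (m1 ! * m1 ! * m2 ! * m2 !) := by ring
  have key : (2*m1).choose m1 * (2*m2).choose m2 = (m1+m2).choose m1 * S :=
    Nat.eq_of_mul_eq_mul_right hpos h5
  obtain ⟨k, hk⟩ : ∃ k, m1 = k + 1 := ⟨m1 - 1, by omega⟩
  have hd : (m1+m2) ∣ m1 * (m1+m2).choose m1 := by
    subst hk
    refine ⟨(k+m2).choose k, ?_⟩
    have hh := Nat.add_one_mul_choose_eq (k+m2) k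
    rw [show k+1+m2 = (k+m2)+1 by ring]
    calc (k+1) * ((k+m2+1).choose (k+1))
        = (k+m2+1).choose (k+1) * (k+1) := by ring
      _ = (k+m2).succ * (k+m2).choose k := hh.symm
      _ = (k+m2+1) * (k+m2).choose k := rfl
  have hrw : m1 * m2 * (2 * m1).choose m1 * (2 * m2).choose m2
      = (m1 * (m1+m2).choose m1) * (m2 * S) := by
    calc m1 * m2 * (2 * m1).choose m1 * (2 * m2).choose m2
        = m1 * m2 * ((2*m1).choose m1 * (2*m2).choose m2) := by ring
      _ = m1 * m2 * ((m1+m2).choose m1 * S) := by rw [key]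
      _ = (m1 * (m1+m2).choose m1) * (m2 * S) := by ring
  rw [hrw]
  exact hd.mul_right _
end

section
/- For all natural numbers m1, m2, (m1 + m2 + 1) divides (2*m1 + 1) * (2*m2 + 1) * binom(2*m1, m1) * binom(2*m2, m2). -/
namespace AnnulusAux

/-- `u a k = C(2a+1, a+1+k)`. -/
def u (a k : ℕ) : ℕ := (2 * a + 1).choose (a + 1 + k)

lemma u_succ_mul (a k : ℕ) : (a + k + 2) * u a (k + 1) = (a - k) * u a k := by
  unfold u
  have h := Nat.choose_succ_right_eq (2 * a + 1) (a + 1 + k)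
  have h1 : a + 1 + (k + 1) = (a + 1 + k) + 1 := by ring
  have h2 : 2 * a + 1 - (a + 1 + k) = a - k := by omega
  rw [h1]
  calc (a + k + 2) * (2 * a + 1).choose (a + 1 + k + 1)
      = (2 * a + 1).choose (a + 1 + k + 1) * ((a + 1 + k) + 1) := by ring
    _ = (2 * a + 1).choose (a + 1 + k) * (2 * a + 1 - (a + 1 + k)) := h
    _ = (a - k) * (2 * a + 1).choose (a + 1 + k) := by rw [h2]; ring

lemma u_eq_zero (a k : ℕ) (h : a < k) : u a k = 0 :=
  Nat.choose_eq_zero_of_lt (by omega)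

/-- The telescoping weight. -/
def W (a b k : ℕ) : ℕ := (a + k + 1) * (b + k + 1) * u a k * u b k

lemma W_step (a b k : ℕ) :
    W a b k = (2 * k + 1) * (a + b + 1) * (u a k * u b k) + W a b (k + 1) := by
  by_cases ha : k ≤ a
  · by_cases hb : k ≤ b
    · -- main case: use the recurrences
      have key : W a b (k + 1) = (a - k) * (b - k) * (u a k * u b k) := by
        have h1 := u_succ_mul a k
        have h2 := u_succ_mul b k
        unfold W
        calc (a + (k+1) + 1) * (b + (k+1) + 1) * u a (k+1) * u b (k+1)
            = ((a + k + 2) * u a (k+1)) * ((b + k + 2) * u b (k+1)) := by ring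
          _ = ((a - k) * u a k) * ((b - k) * u b k) := by rw [h1, h2]
          _ = (a - k) * (b - k) * (u a k * u b k) := by ring
      rw [key]
      obtain ⟨i, rfl⟩ := Nat.exists_eq_add_of_le ha
      obtain ⟨j, rfl⟩ := Nat.exists_eq_add_of_le hb
      have hi : k + i - k = i := by omega
      have hj : k + j - k = j := by omega
      rw [hi, hj]
      unfold W
      ring
    · have hz : u b k = 0 := u_eq_zero b k (by omega)
      have hz' : u b (k + 1) = 0 := u_eq_zero b (k + 1) (by omega)
      unfold W
      rw [hz, hz']
      ring
  · have hz : u a k = 0 := u_eq_zero a k (by omega)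
    have hz' : u a (k + 1) = 0 := u_eq_zero a (k + 1) (by omega)
    unfold W
    rw [hz, hz']
    ring

lemma W_telescope (a b : ℕ) : ∀ M : ℕ, ∃ s : ℕ, W a b 0 = (a + b + 1) * s + W a b M := by
  intro M
  induction M with
  | zero => exact ⟨0, by ring⟩
  | succ M ih =>
    obtain ⟨s, hs⟩ := ih
    refine ⟨s + (2 * M + 1) * (u a M * u b M), ?_⟩
    rw [hs, W_step a b M]
    ring

lemma dvd_W_zero (a b : ℕ) : (a + b + 1) ∣ W a b 0 := by
  obtain ⟨s, hs⟩ := W_telescope a b (a + 1)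
  have hz : u a (a + 1) = 0 := u_eq_zero a (a + 1) (by omega)
  rw [hs]
  unfold W
  rw [hz]
  simp

end AnnulusAux

theorem annulus_traversing_odd_integrality (m1 m2 : ℕ) :
    (m1 + m2 + 1) ∣ (2 * m1 + 1) * (2 * m2 + 1) * (2 * m1).choose m1 * (2 * m2).choose m2 := by
  have key : (2 * m1 + 1) * (2 * m2 + 1) * (2 * m1).choose m1 * (2 * m2).choose m2
      = AnnulusAux.W m1 m2 0 := by
    have h1 : (2 * m1 + 1) * (2 * m1).choose m1 = (m1 + 1) * AnnulusAux.u m1 0 := by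
      unfold AnnulusAux.u
      have := Nat.add_one_mul_choose_eq (2 * m1) m1
      calc (2 * m1 + 1) * (2 * m1).choose m1
          = (2 * m1).succ * (2 * m1).choose m1 := by rfl
        _ = (2 * m1 + 1).choose (m1 + 1) * (m1 + 1) := this
        _ = (m1 + 1) * (2 * m1 + 1).choose (m1 + 1 + 0) := by ring_nf
    have h2 : (2 * m2 + 1) * (2 * m2).choose m2 = (m2 + 1) * AnnulusAux.u m2 0 := by
      unfold AnnulusAux.u
      have := Nat.add_one_mul_choose_eq (2 * m2) m2
      calc (2 * m2 + 1) * (2 * m2).choose m2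
          = (2 * m2).succ * (2 * m2).choose m2 := by rfl
        _ = (2 * m2 + 1).choose (m2 + 1) * (m2 + 1) := this
        _ = (m2 + 1) * (2 * m2 + 1).choose (m2 + 1 + 0) := by ring_nf
    calc (2 * m1 + 1) * (2 * m2 + 1) * (2 * m1).choose m1 * (2 * m2).choose m2
        = ((2 * m1 + 1) * (2 * m1).choose m1) * ((2 * m2 + 1) * (2 * m2).choose m2) := by ring
      _ = ((m1 + 1) * AnnulusAux.u m1 0) * ((m2 + 1) * AnnulusAux.u m2 0) := by rw [h1, h2]
      _ = AnnulusAux.W m1 m2 0 := by unfold AnnulusAux.W; ring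
  rw [key]
  exact AnnulusAux.dvd_W_zero m1 m2
end

section
/- Let b1, b2, b3 be nonnegative integers with b1 + b2 + b3 even. Then there exist unique nonnegative integers t12, t23, t31, p1, p2, p3 satisfying: b1 = t12 + t31 + 2*p1, b2 = t23 + t12 + 2*p2, b3 = t31 + t23 + 2*p3, and moreover (p1 > 0 implies p2 = p3 = t23 = 0), (p2 > 0 implies p3 = p1 = t31 = 0), and (p3 > 0 implies p1 = p2 = t12 = 0). -/
/-- Existence and uniqueness of the arc parameters `(t12, t23, t31, p1, p2, p3)`
on a pair of pants with boundary point counts `b1, b2, b3` of even sum. -/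
theorem pants_parameters_existsUnique (b1 b2 b3 : ℕ) (h : Even (b1 + b2 + b3)) :
    ∃! x : ℕ × ℕ × ℕ × ℕ × ℕ × ℕ,
      b1 = x.1 + x.2.2.1 + 2 * x.2.2.2.1 ∧
      b2 = x.2.1 + x.1 + 2 * x.2.2.2.2.1 ∧
      b3 = x.2.2.1 + x.2.1 + 2 * x.2.2.2.2.2 ∧
      (0 < x.2.2.2.1 → x.2.2.2.2.1 = 0 ∧ x.2.2.2.2.2 = 0 ∧ x.2.1 = 0) ∧
      (0 < x.2.2.2.2.1 → x.2.2.2.2.2 = 0 ∧ x.2.2.2.1 = 0 ∧ x.2.2.1 = 0) ∧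
      (0 < x.2.2.2.2.2 → x.2.2.2.1 = 0 ∧ x.2.2.2.2.1 = 0 ∧ x.1 = 0) := by
  obtain ⟨m, hm⟩ := h
  by_cases h1 : b2 + b3 < b1
  · refine ⟨(b2, 0, b3, (b1 - b2 - b3)/2, 0, 0), by dsimp only; omega, ?_⟩
    rintro ⟨t, s, u, p, q, r⟩ hy
    dsimp only at hy ⊢
    simp only [Prod.mk.injEq]
    omega
  · by_cases h2 : b3 + b1 < b2
    · refine ⟨(b1, b3, 0, 0, (b2 - b3 - b1)/2, 0), by dsimp only; omega, ?_⟩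
      rintro ⟨t, s, u, p, q, r⟩ hy
      dsimp only at hy ⊢
      simp only [Prod.mk.injEq]
      omega
    · by_cases h3 : b1 + b2 < b3
      · refine ⟨(0, b2, b1, 0, 0, (b3 - b1 - b2)/2), by dsimp only; omega, ?_⟩
        rintro ⟨t, s, u, p, q, r⟩ hy
        dsimp only at hy ⊢
        simp only [Prod.mk.injEq]
        omega
      · refine ⟨((b1 + b2 - b3)/2, (b2 + b3 - b1)/2, (b3 + b1 - b2)/2, 0, 0, 0),
          by dsimp only; omega, ?_⟩
        rintro ⟨t, s, u, p, q, r⟩ hy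
        dsimp only at hy ⊢
        simp only [Prod.mk.injEq]
        omega
end

section
/- For every natural number n, the sum over l from 0 to n of binom(2n, n-l) * (2l)^3 equals 4 * n^2 * binom(2n, n). -/
lemma tilde_p_aux (n : ℕ) : ∀ m, m ≤ n + 1 →
    ∑ k ∈ Finset.range m, (2 * n).choose k * (2 * (n - k)) ^ 3
      + 4 * (2 * n).choose m * ((2 * n + 1) * m ^ 2)
    = 4 * (2 * n).choose m * (m ^ 3 + n * (n + 2) * m) := by
  intro m
  induction m with
  | zero => simp
  | succ m ih =>
    intro hm
    have hmn : m ≤ n := Nat.lt_succ_iff.mp hm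
    have ihm := ih (le_trans (Nat.le_succ m) hm)
    obtain ⟨d, hd⟩ := Nat.exists_eq_add_of_le hmn
    have hrel : (2 * n).choose (m + 1) * (m + 1) = (2 * n).choose m * (2 * n - m) :=
      Nat.choose_succ_right_eq (2 * n) m
    have h2 : 2 * n - m = m + 2 * d := by omega
    rw [h2] at hrel
    rw [Finset.sum_range_succ]
    have hnm : n - m = d := by omega
    rw [hnm]
    subst hd
    set S := ∑ k ∈ Finset.range m, (2 * (m + d)).choose k * (2 * (m + d - k)) ^ 3 with hS
    set A := (2 * (m + d)).choose m with hA
    set B := (2 * (m + d)).choose (m + 1) with hB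
    -- cast to ℤ
    have hrelZ : (B : ℤ) * (m + 1) = (A : ℤ) * (m + 2 * d) := by exact_mod_cast hrel
    have ihmZ : (S : ℤ) + 4 * A * ((2 * (m + d) + 1) * m ^ 2)
        = 4 * A * (m ^ 3 + (m + d) * (m + d + 2) * m) := by exact_mod_cast ihm
    have keyZ : ((S : ℤ) + A * (2 * d) ^ 3
        + 4 * B * ((2 * (m + d) + 1) * ((m : ℤ) + 1) ^ 2)) * ((m : ℤ) + 1)
        = (4 * B * (((m : ℤ) + 1) ^ 3 + ((m : ℤ) + d) * ((m : ℤ) + d + 2) * ((m : ℤ) + 1)))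
          * ((m : ℤ) + 1) := by
      linear_combination ((m : ℤ) + 1) * ihmZ
        + (4 * ((2 * ((m : ℤ) + d) + 1) * ((m : ℤ) + 1) ^ 2
            - (((m : ℤ) + 1) ^ 3 + ((m : ℤ) + d) * ((m : ℤ) + d + 2) * ((m : ℤ) + 1)))) * hrelZ
    have keyN : (S + A * (2 * d) ^ 3
        + 4 * B * ((2 * (m + d) + 1) * (m + 1) ^ 2)) * (m + 1)
        = (4 * B * ((m + 1) ^ 3 + (m + d) * (m + d + 2) * (m + 1))) * (m + 1) := by
      exact_mod_cast keyZ
    exact Nat.eq_of_mul_eq_mul_right (Nat.succ_pos m) keyN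

theorem tilde_p_one (n : ℕ) :
    ∑ l ∈ Finset.range (n + 1), (2 * n).choose (n - l) * (2 * l) ^ 3 =
      4 * n ^ 2 * (2 * n).choose n := by
  have hrefl : ∑ l ∈ Finset.range (n + 1), (2 * n).choose (n - l) * (2 * l) ^ 3
      = ∑ k ∈ Finset.range (n + 1), (2 * n).choose k * (2 * (n - k)) ^ 3 := by
    rw [← Finset.sum_range_reflect]
    apply Finset.sum_congr rfl
    intro k hk
    have hk' : k ≤ n := Nat.lt_succ_iff.mp (Finset.mem_range.mp hk)
    simp only [Nat.add_sub_cancel]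
    have h1 : n - (n - k) = k := by omega
    rw [h1]
  rw [hrefl]
  have haux := tilde_p_aux n (n + 1) le_rfl
  have hrel : (2 * n).choose (n + 1) * (n + 1) = (2 * n).choose n * (2 * n - n) :=
    Nat.choose_succ_right_eq (2 * n) n
  have h2 : 2 * n - n = n := by omega
  rw [h2] at hrel
  set S := ∑ k ∈ Finset.range (n + 1), (2 * n).choose k * (2 * (n - k)) ^ 3 with hS
  set A := (2 * n).choose n with hA
  set B := (2 * n).choose (n + 1) with hB
  have hrelZ : (B : ℤ) * (n + 1) = (A : ℤ) * n := by exact_mod_cast hrel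
  have hauxZ : (S : ℤ) + 4 * B * ((2 * n + 1) * ((n : ℤ) + 1) ^ 2)
      = 4 * B * (((n : ℤ) + 1) ^ 3 + (n : ℤ) * ((n : ℤ) + 2) * ((n : ℤ) + 1)) := by
    exact_mod_cast haux
  have goalZ : (S : ℤ) = 4 * (n : ℤ) ^ 2 * A := by
    linear_combination hauxZ + 4 * (n : ℤ) * hrelZ
  exact_mod_cast goalZ
end

section
/- For every natural number n, the sum over l from 0 to n of binom(2n+1, n-l) * (2l+1)^3 equals (2n+1) * (4n+1) * binom(2n, n). -/
theorem tilde_q_one (n : ℕ) :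
    ∑ l ∈ Finset.range (n + 1), (2 * n + 1).choose (n - l) * (2 * l + 1) ^ 3 =
      (2 * n + 1) * (4 * n + 1) * (2 * n).choose n := by
  set m : ℤ := 2 * (n : ℤ) + 1 with hm
  have key : ∀ N : ℕ, N ≤ n →
      ∑ j ∈ Finset.range (N + 1), ((2 * n + 1).choose j : ℤ) * (m - 2 * j) ^ 3
        = ((2 * n + 1).choose N : ℤ) *
          (m ^ 3 + (4 * m - 5 * m ^ 2) * N + (8 * m - 4) * N ^ 2 - 4 * (N : ℤ) ^ 3) := by
    intro N
    induction N with
    | zero => intro _; simp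
    | succ N ih =>
      intro hN
      rw [Finset.sum_range_succ, ih (by omega)]
      have hb : ((2 * n + 1).choose (N + 1) : ℤ) * (N + 1)
          = ((2 * n + 1).choose N : ℤ) * (m - N) := by
        have h := Nat.choose_succ_right_eq (2 * n + 1) N
        have hle : N ≤ 2 * n + 1 := by omega
        have h2 : (((2 * n + 1 - N : ℕ)) : ℤ) = m - N := by
          rw [Nat.cast_sub hle]; push_cast [hm]; ring
        have h3 := congrArg (Nat.cast : ℕ → ℤ) h
        push_cast at h3
        rw [h3, h2]
      push_cast
      refine mul_left_cancel₀ (a := (N : ℤ) + 1) (by positivity) ?_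
      linear_combination ((m - 2 * (N : ℤ) - 2) ^ 3
        - (m ^ 3 + (4 * m - 5 * m ^ 2) * ((N : ℤ) + 1) + (8 * m - 4) * ((N : ℤ) + 1) ^ 2
          - 4 * ((N : ℤ) + 1) ^ 3)) * hb
  have hsum : (∑ l ∈ Finset.range (n + 1),
      ((2 * n + 1).choose (n - l) : ℤ) * (2 * (l : ℤ) + 1) ^ 3)
      = ∑ j ∈ Finset.range (n + 1), ((2 * n + 1).choose j : ℤ) * (m - 2 * j) ^ 3 := by
    rw [← Finset.sum_range_reflect]
    refine Finset.sum_congr rfl ?_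
    intro j hj
    simp only [Finset.mem_range] at hj
    have hj' : j ≤ n := by omega
    have h1 : n + 1 - 1 - j = n - j := by omega
    rw [h1, Nat.sub_sub_self hj']
    have h2 : ((n - j : ℕ) : ℤ) = (n : ℤ) - j := by
      rw [Nat.cast_sub hj']
    rw [h2, hm]; ring
  have hrel : (2 * n + 1) * (2 * n).choose n = (2 * n + 1).choose n * (n + 1) := by
    have h1 := Nat.add_one_mul_choose_eq (2 * n) n
    rw [Nat.choose_symm_half] at h1
    simpa using h1
  have hz : ((∑ l ∈ Finset.range (n + 1),
      (2 * n + 1).choose (n - l) * (2 * l + 1) ^ 3 : ℕ) : ℤ)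
      = ((2 * n + 1) * (4 * n + 1) * (2 * n).choose n : ℕ) := by
    push_cast
    rw [hsum, key n le_rfl]
    have hrelz := congrArg (Nat.cast : ℕ → ℤ) hrel
    push_cast at hrelz
    linear_combination (-(4 * (n : ℤ) + 1)) * hrelz
  exact Nat.cast_injective hz
end

section
/- Define a sequence of polynomials p_alpha in Q[x] by p_0 = 1 and p_{alpha+1}(x) = 4x^2 * (p_alpha(x) - p_alpha(x-1)) + 4x * p_alpha(x-1). Then for every natural number alpha and every natural number n, the sum over l from 0 to n of binom(2n, n-l) * (2l)^(2*alpha+1) equals binom(2n, n) * n * (p_alpha evaluated at n). -/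
open Polynomial

private lemma step_chain (l d : ℕ) :
    ((d+1) * (2*l+d+1)) * Nat.choose (2*(l+d)+2) (d+1)
      = ((2*(l+d)+2) * (2*(l+d)+1)) * Nat.choose (2*(l+d)) d := by
  have A := Nat.add_one_mul_choose_eq (2*(l+d)+1) d
  have B : Nat.choose (2*(l+d)+1) d = Nat.choose (2*(l+d)+1) (2*l+d+1) := by
    have h := Nat.choose_symm (show d ≤ 2*(l+d)+1 by omega)
    rw [show (2*(l+d)+1) - d = 2*l+d+1 by omega] at h
    exact h.symm
  have C := Nat.add_one_mul_choose_eq (2*(l+d)) (2*l+d)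
  have D : Nat.choose (2*(l+d)) (2*l+d) = Nat.choose (2*(l+d)) d := by
    have h := Nat.choose_symm (show 2*l+d ≤ 2*(l+d) by omega)
    rw [show (2*(l+d)) - (2*l+d) = d by omega] at h
    exact h.symm
  rw [B] at A
  rw [D] at C
  -- A : (2*(l+d)+1+1) * choose (2*(l+d)+1) (2*l+d+1) = choose (2*(l+d)+2) (d+1) * (d+1)
  -- C : (2*(l+d)+1) * choose (2*(l+d)) d = choose (2*(l+d)+1) (2*l+d+1) * (2*l+d+1)
  nlinarith [A, C]

private lemma keyQ (l d : ℕ) :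
    (((2*(l+d)+2).choose (d+1) : ℚ)) * (2*l)^2
      = 4*((l:ℚ)+d+1)^2 * ((2*(l+d)+2).choose (d+1) : ℚ)
        - 8*((l:ℚ)+d+1)*(2*(l+d)+1) * ((2*(l+d)).choose d : ℚ) := by
  have h := step_chain l d
  have hq : (((d:ℚ)+1) * (2*l+d+1)) * ((2*(l+d)+2).choose (d+1) : ℚ)
      = ((2*((l:ℚ)+d)+2) * (2*((l:ℚ)+d)+1)) * ((2*(l+d)).choose d : ℚ) := by
    exact_mod_cast congrArg (Nat.cast : ℕ → ℚ) h
  linear_combination (-4 : ℚ) * hq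

private lemma base_sum (n : ℕ) :
    ∑ l ∈ Finset.range (n+1), ((2*n).choose (n-l) : ℚ) * (2*l) = ((2*n).choose n : ℚ) * n := by
  set a : ℕ → ℚ := fun l => if l ≤ n then (((n:ℚ)+l) * ((2*n).choose (n-l) : ℚ)) else 0 with ha
  have key : ∀ l ∈ Finset.range (n+1), ((2*n).choose (n-l) : ℚ) * (2*l) = a l - a (l+1) := by
    intro l hl
    rw [Finset.mem_range] at hl
    rcases Nat.lt_or_ge l n with h | h
    · obtain ⟨k, rfl⟩ : ∃ k, n = l + 1 + k := ⟨n - l - 1, by omega⟩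
      simp only [ha, if_pos (by omega : l ≤ l+1+k), if_pos (by omega : l+1 ≤ l+1+k)]
      have e1 : (l+1+k) - l = k+1 := by omega
      have e2 : (l+1+k) - (l+1) = k := by omega
      rw [e1, e2]
      have h3 := Nat.choose_succ_right_eq (2*(l+1+k)) k
      have e3 : 2*(l+1+k) - k = l + 1 + k + l + 1 := by omega
      rw [e3] at h3
      have h3q : ((2*(l+1+k)).choose (k+1) : ℚ) * (k+1)
          = ((2*(l+1+k)).choose k : ℚ) * ((l:ℚ) + 1 + k + l + 1) := by
        exact_mod_cast congrArg (Nat.cast : ℕ → ℚ) h3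
      push_cast
      linear_combination -h3q
    · have hln : l = n := by omega
      subst hln
      simp only [ha, if_pos (le_refl l), if_neg (by omega : ¬ l + 1 ≤ l), Nat.sub_self,
        Nat.choose_zero_right]
      push_cast
      ring
  rw [Finset.sum_congr rfl key, Finset.sum_range_sub' a (n+1)]
  simp only [ha, if_pos (Nat.zero_le n), if_neg (by omega : ¬ n + 1 ≤ n), Nat.sub_zero]
  push_cast
  ring

private lemma central (m : ℕ) :
    ((m:ℚ)+1) * ((2*(m+1)).choose (m+1) : ℚ) = 2*(2*(m:ℚ)+1) * ((2*m).choose m : ℚ) := by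
  have h := Nat.succ_mul_centralBinom_succ m
  rw [Nat.centralBinom, Nat.centralBinom] at h
  exact_mod_cast congrArg (Nat.cast : ℕ → ℚ) h

/-- Norbury–Scott: with `p 0 = 1` and
`p (α+1) (x) = 4 x^2 (p α (x) - p α (x-1)) + 4 x * p α (x-1)`, we have
`∑_{l=0}^n binom(2n, n-l) (2l)^(2α+1) = binom(2n,n) * n * p α (n)`. -/
theorem tilde_p_eval (p : ℕ → Polynomial ℚ)
    (h0 : p 0 = 1)
    (hrec : ∀ a : ℕ, p (a + 1) =
      4 * X ^ 2 * (p a - (p a).comp (X - 1)) + 4 * X * (p a).comp (X - 1))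
    (α n : ℕ) :
    ∑ l ∈ Finset.range (n + 1), ((2 * n).choose (n - l) : ℚ) * (2 * l) ^ (2 * α + 1) =
      ((2 * n).choose n : ℚ) * n * (p α).eval (n : ℚ) := by
  induction α generalizing n with
  | zero =>
    rw [h0]
    simp only [eval_one, mul_one, Nat.mul_zero, Nat.zero_add, pow_one]
    exact_mod_cast base_sum n
  | succ a ih =>
    rw [hrec a]
    simp only [eval_add, eval_mul, eval_pow, eval_X, eval_sub, eval_comp, eval_one, eval_ofNat]
    rcases n with _ | m
    · simp
    · have split : ∀ l ∈ Finset.range (m+1),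
          ((2*(m+1)).choose ((m+1)-l) : ℚ) * (2*(l:ℚ)) ^ (2*(a+1)+1)
            = 4*((m:ℚ)+1)^2 * (((2*(m+1)).choose ((m+1)-l) : ℚ) * (2*(l:ℚ))^(2*a+1))
              - 8*((m:ℚ)+1)*(2*(m:ℚ)+1) * (((2*m).choose (m-l):ℚ) * (2*(l:ℚ))^(2*a+1)) := by
        intro l hl
        rw [Finset.mem_range] at hl
        obtain ⟨d, rfl⟩ : ∃ d, m = l + d := ⟨m - l, by omega⟩
        have e1 : l + d + 1 - l = d + 1 := by omega
        have e2 : l + d - l = d := by omega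
        have e3 : 2 * (l + d + 1) = 2*(l+d)+2 := by omega
        rw [e1, e2, e3]
        have hk := keyQ l d
        push_cast
        linear_combination (2*(l:ℚ))^(2*a+1) * hk
      have hG : ∑ l ∈ Finset.range (m+1), ((2*(m+1)).choose ((m+1)-l) : ℚ) * (2*(l:ℚ))^(2*a+1)
          = ((2*(m+1)).choose (m+1) : ℚ) * ((m+1 : ℕ) : ℚ) * (p a).eval (((m+1 : ℕ)):ℚ)
            - ((2*(m+1)).choose ((m+1)-(m+1)) : ℚ) * (2*((m+1 : ℕ):ℚ))^(2*a+1) := by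
        rw [eq_sub_iff_add_eq, ← Finset.sum_range_succ
          (fun l => ((2*(m+1)).choose ((m+1)-l) : ℚ) * (2*(l:ℚ))^(2*a+1)) (m+1)]
        exact ih (m+1)
      rw [Finset.sum_range_succ, Finset.sum_congr rfl split, Finset.sum_sub_distrib,
        ← Finset.mul_sum, ← Finset.mul_sum, ih m, hG]
      have hc := central m
      simp only [Nat.sub_self, Nat.choose_zero_right, Nat.cast_one]
      push_cast
      rw [show ((m:ℚ) + 1) - 1 = (m:ℚ) from by ring]
      linear_combination (4*((m:ℚ)+1)*(m:ℚ)*(p a).eval (m:ℚ)) * hc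
end

section
/- Define a sequence of polynomials q_alpha in Q[x] by q_0 = 1 and q_{alpha+1}(x) = 4x^2 * (q_alpha(x) - q_alpha(x-1)) + (4x+1) * q_alpha(x). Then for every natural number alpha and every natural number n, the sum over l from 0 to n of binom(2n+1, n-l) * (2l+1)^(2*alpha+1) equals binom(2n, n) * (2n+1) * (q_alpha evaluated at n). -/
open Polynomial

private lemma ns_symm (n l : ℕ) (h : l ≤ n) :
    (2 * n + 1).choose (n - l) = (2 * n + 1).choose (n + l + 1) := by
  rw [show n - l = 2 * n + 1 - (n + l + 1) by omega]
  exact Nat.choose_symm (by omega)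

/-- Base case: `∑_{l=0}^n C(2n+1, n-l) (2l+1) = C(2n,n)(2n+1)` (telescoping). -/
private lemma ns_base (n : ℕ) :
    ∑ l ∈ Finset.range (n + 1), ((2 * n + 1).choose (n - l) : ℚ) * (2 * l + 1)
      = ((2 * n).choose n : ℚ) * (2 * n + 1) := by
  have hterm : ∀ l ∈ Finset.range (n + 1),
      ((2 * n + 1).choose (n - l) : ℚ) * (2 * l + 1)
        = (fun l => ((n + l + 1 : ℕ) : ℚ) * ((2 * n + 1).choose (n + l + 1) : ℚ)) l
          - (fun l => ((n + l + 1 : ℕ) : ℚ) * ((2 * n + 1).choose (n + l + 1) : ℚ)) (l + 1) := by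
    intro l hl
    simp only [Finset.mem_range] at hl
    have hl' : l ≤ n := by omega
    rw [ns_symm n l hl']
    have h1 : (2 * n + 1).choose (n + l + 1 + 1) * (n + l + 1 + 1)
        = (2 * n + 1).choose (n + l + 1) * (n - l) := by
      have := Nat.choose_succ_right_eq (2 * n + 1) (n + l + 1)
      rwa [show 2 * n + 1 - (n + l + 1) = n - l by omega] at this
    have h1q : ((2 * n + 1).choose (n + l + 1 + 1) : ℚ) * ((n + l + 1 + 1 : ℕ) : ℚ)
        = ((2 * n + 1).choose (n + l + 1) : ℚ) * ((n : ℚ) - l) := by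
      rw [show (n : ℚ) - l = ((n - l : ℕ) : ℚ) by push_cast [Nat.cast_sub hl']; ring]
      exact_mod_cast h1
    simp only [show n + (l + 1) + 1 = n + l + 1 + 1 from by omega]
    push_cast
    push_cast at h1q
    linear_combination h1q
  rw [Finset.sum_congr rfl hterm, Finset.sum_range_sub']
  have h0 : (2 * n + 1) * (2 * n).choose n = (2 * n + 1).choose (n + 1) * (n + 1) := by
    exact_mod_cast Nat.add_one_mul_choose_eq (2 * n) n
  have hz : (2 * n + 1).choose (n + (n + 1) + 1) = 0 :=
    Nat.choose_eq_zero_of_lt (by omega)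
  simp only [hz, Nat.cast_zero, mul_zero, sub_zero, Nat.add_zero, Nat.cast_add, Nat.cast_one,
    Nat.cast_ofNat, Nat.cast_mul]
  have h0q : (2 * (n : ℚ) + 1) * ((2 * n).choose n : ℚ)
      = ((2 * n + 1).choose (n + 1) : ℚ) * ((n : ℚ) + 1) := by exact_mod_cast h0
  linear_combination -h0q

/-- Key step identity, termwise. -/
private lemma ns_key (a l k : ℕ) :
    (((2 * (l + k + 1) + 1).choose (k + 1) : ℚ)) * (2 * l + 1) ^ (2 * (a + 1) + 1)
      = (2 * ((l : ℚ) + k + 1) + 1) ^ 2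
          * (((2 * (l + k + 1) + 1).choose (k + 1) : ℚ) * (2 * l + 1) ^ (2 * a + 1))
        - 8 * ((l : ℚ) + k + 1) * (2 * ((l : ℚ) + k + 1) + 1)
          * (((2 * (l + k) + 1).choose k : ℚ) * (2 * l + 1) ^ (2 * a + 1)) := by
  have A : (2 * l + 2 * k + 2 + 1) * (2 * l + 2 * k + 2).choose k
      = (2 * l + 2 * k + 2 + 1).choose (k + 1) * (k + 1) :=
    Nat.add_one_mul_choose_eq (2 * l + 2 * k + 2) k
  have B : (2 * l + 2 * k + 1).choose k * (2 * l + 2 * k + 1 + 1)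
      = (2 * l + 2 * k + 1 + 1).choose k * (2 * l + k + 2) := by
    have := Nat.choose_mul_succ_eq (2 * l + 2 * k + 1) k
    rwa [show 2 * l + 2 * k + 1 + 1 - k = 2 * l + k + 2 by omega] at this
  have hc1 : 2 * (l + k + 1) + 1 = 2 * l + 2 * k + 2 + 1 := by omega
  have hc2 : 2 * (l + k) + 1 = 2 * l + 2 * k + 1 := by omega
  have hc3 : 2 * l + 2 * k + 2 = 2 * l + 2 * k + 1 + 1 := by omega
  rw [hc1, hc2]
  have Aq : ((2 * (l : ℚ) + 2 * k + 2 + 1)) * ((2 * l + 2 * k + 2).choose k : ℚ)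
      = ((2 * l + 2 * k + 2 + 1).choose (k + 1) : ℚ) * ((k : ℚ) + 1) := by exact_mod_cast A
  have Bq : ((2 * l + 2 * k + 1).choose k : ℚ) * (2 * (l : ℚ) + 2 * k + 1 + 1)
      = ((2 * l + 2 * k + 1 + 1).choose k : ℚ) * (2 * (l : ℚ) + k + 2) := by exact_mod_cast B
  rw [hc3] at Aq
  set T : ℚ := (2 * (l : ℚ) + 1) ^ (2 * a + 1) with hT
  have hpow : (2 * (l : ℚ) + 1) ^ (2 * (a + 1) + 1) = (2 * (l : ℚ) + 1) ^ 2 * T := by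
    rw [hT, ← pow_add]; ring_nf
  rw [hpow]
  linear_combination (4 * T * (2 * (l : ℚ) + k + 2)) * Aq + (4 * T * (2 * (l : ℚ) + 2 * k + 3)) * Bq

private lemma ns_key2 (m : ℕ) :
    ((m : ℚ) + 1) * ((2 * (m + 1)).choose (m + 1) : ℚ)
      = 2 * (2 * (m : ℚ) + 1) * ((2 * m).choose m : ℚ) := by
  have := Nat.succ_mul_centralBinom_succ m
  simp only [Nat.centralBinom] at this
  exact_mod_cast this

/-- Norbury–Scott: with `q 0 = 1` and
`q (α+1) (x) = 4 x^2 (q α (x) - q α (x-1)) + (4x+1) * q α (x)`, we have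
`∑_{l=0}^n binom(2n+1, n-l) (2l+1)^(2α+1) = binom(2n,n) * (2n+1) * q α (n)`. -/
theorem tilde_q_eval (q : ℕ → Polynomial ℚ)
    (h0 : q 0 = 1)
    (hrec : ∀ a : ℕ, q (a + 1) =
      4 * X ^ 2 * (q a - (q a).comp (X - 1)) + (4 * X + 1) * q a)
    (α n : ℕ) :
    ∑ l ∈ Finset.range (n + 1), ((2 * n + 1).choose (n - l) : ℚ) * (2 * l + 1) ^ (2 * α + 1) =
      ((2 * n).choose n : ℚ) * (2 * n + 1) * (q α).eval (n : ℚ) := by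
  induction α generalizing n with
  | zero =>
    rw [h0]
    simpa using ns_base n
  | succ a ih =>
    rcases Nat.eq_zero_or_pos n with rfl | hn
    · have h := ih 0
      simp only [Nat.mul_zero, Nat.zero_add, Finset.range_one, Finset.sum_singleton,
        Nat.choose_self, Nat.cast_one, Nat.cast_zero, Nat.zero_sub, Nat.choose_zero_right,
        one_mul, mul_one, mul_zero, zero_add, one_pow] at h ⊢
      rw [hrec]
      simp only [eval_add, eval_mul, eval_pow, eval_ofNat, eval_X, eval_sub, eval_comp,
        eval_one]
      ring_nf
      ring_nf at h
      linear_combination h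
    · -- n ≥ 1
      have e1 : n - 1 + 1 = n := by omega
      have hih1 := ih n
      have hih2 := ih (n - 1)
      rw [e1] at hih2
      have hterm : ∀ l ∈ Finset.range n,
          ((2 * n + 1).choose (n - l) : ℚ) * (2 * l + 1) ^ (2 * (a + 1) + 1)
            = (2 * (n : ℚ) + 1) ^ 2
                * (((2 * n + 1).choose (n - l) : ℚ) * (2 * l + 1) ^ (2 * a + 1))
              - 8 * (n : ℚ) * (2 * (n : ℚ) + 1)
                * (((2 * (n - 1) + 1).choose (n - 1 - l) : ℚ) * (2 * l + 1) ^ (2 * a + 1)) := by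
        intro l hl
        simp only [Finset.mem_range] at hl
        obtain ⟨k, rfl⟩ : ∃ k, n = l + k + 1 := ⟨n - l - 1, by omega⟩
        rw [show l + k + 1 - l = k + 1 by omega, show l + k + 1 - 1 = l + k by omega,
          show l + k - l = k by omega]
        have := ns_key a l k
        push_cast at this ⊢
        linear_combination this
      have hsplit :
          (∑ l ∈ Finset.range (n + 1),
              ((2 * n + 1).choose (n - l) : ℚ) * (2 * l + 1) ^ (2 * (a + 1) + 1))
            = (2 * (n : ℚ) + 1) ^ 2
                * (∑ l ∈ Finset.range (n + 1),
                    ((2 * n + 1).choose (n - l) : ℚ) * (2 * l + 1) ^ (2 * a + 1))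
              - 8 * (n : ℚ) * (2 * (n : ℚ) + 1)
                * (∑ l ∈ Finset.range n,
                    ((2 * (n - 1) + 1).choose (n - 1 - l) : ℚ) * (2 * l + 1) ^ (2 * a + 1)) := by
        rw [Finset.sum_range_succ, Finset.sum_range_succ
          (fun l => ((2 * n + 1).choose (n - l) : ℚ) * (2 * l + 1) ^ (2 * a + 1)) n]
        rw [Finset.sum_congr rfl hterm]
        rw [Finset.sum_sub_distrib, ← Finset.mul_sum, ← Finset.mul_sum]
        simp only [Nat.sub_self, Nat.choose_zero_right, Nat.cast_one, one_mul]
        ring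
      rw [hsplit, hih1, hih2]
      have hcast : ((n - 1 : ℕ) : ℚ) = (n : ℚ) - 1 := by
        push_cast [Nat.cast_sub hn]; ring
      have heval : (q (a + 1)).eval (n : ℚ)
          = 4 * (n : ℚ) ^ 2 * ((q a).eval (n : ℚ) - (q a).eval ((n : ℚ) - 1))
            + (4 * (n : ℚ) + 1) * (q a).eval (n : ℚ) := by
        rw [hrec]
        simp [eval_comp]
      rw [heval, hcast]
      have K := ns_key2 (n - 1)
      rw [e1, hcast] at K
      set u : ℚ := (q a).eval (n : ℚ)
      set v : ℚ := (q a).eval ((n : ℚ) - 1)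
      linear_combination (4 * (n : ℚ) * (2 * (n : ℚ) + 1) * v) * K
end

section
/- For every even natural number k, 240 times the sum of n-bar(p) * n-bar(q) * r over all triples of natural numbers (p, q, r) with p + q + r = k and r even equals k^5 + 30*k^3 + 104*k, where n-bar(p) = p if p > 0 and n-bar(0) = 1. -/
open Finset

private def g (r : ℕ) : ℤ := if Even r then (r : ℤ) else 0

private def Af (n : ℕ) : ℤ :=
  ∑ y ∈ Finset.HasAntidiagonal.antidiagonal n, (if y.1 = 0 then 1 else (y.1 : ℤ)) * g y.2

private lemma corr (n : ℕ) (f : ℕ → ℤ) :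
    ∑ y ∈ Finset.HasAntidiagonal.antidiagonal n, (if y.1 = 0 then 1 else (y.1 : ℤ)) * f y.2 =
      (∑ y ∈ Finset.HasAntidiagonal.antidiagonal n, (y.1 : ℤ) * f y.2) + f n := by
  rw [Finset.Nat.sum_antidiagonal_eq_sum_range_succ_mk,
      Finset.Nat.sum_antidiagonal_eq_sum_range_succ_mk]
  have h : ∀ i ∈ Finset.range (n + 1),
      (if i = 0 then 1 else (i : ℤ)) * f (n - i) =
        (i : ℤ) * f (n - i) + (if i = 0 then f (n - i) else 0) := by
    intro i _
    by_cases h : i = 0 <;> simp [h]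
  rw [Finset.sum_congr rfl h, Finset.sum_add_distrib]
  congr 1
  rw [Finset.sum_ite_eq' (Finset.range (n + 1)) 0 (fun i => f (n - i))]
  simp

private lemma E1 (n : ℕ) :
    4 * ∑ i ∈ Finset.range (n + 1), g i =
      if Even n then (n : ℤ) ^ 2 + 2 * n else (n : ℤ) ^ 2 - 1 := by
  induction n with
  | zero => simp [g]
  | succ n ih =>
    rw [Finset.sum_range_succ, mul_add, ih]
    rcases Nat.even_or_odd n with h | h
    · have h1 : ¬ Even (n + 1) := by simp [Nat.even_add_one, h]
      simp only [g, h, h1, if_true, if_false]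
      push_cast; ring
    · have h0 : ¬ Even n := Nat.not_even_iff_odd.mpr h
      have h1 : Even (n + 1) := Nat.even_add_one.mpr h0
      simp only [g, h0, h1, if_true, if_false]
      push_cast; ring

private lemma E2 (n : ℕ) :
    6 * ∑ i ∈ Finset.range (n + 1), (i : ℤ) * g i =
      if Even n then (n : ℤ) ^ 3 + 3 * (n : ℤ) ^ 2 + 2 * n else (n : ℤ) ^ 3 - n := by
  induction n with
  | zero => simp [g]
  | succ n ih =>
    rw [Finset.sum_range_succ, mul_add, ih]
    rcases Nat.even_or_odd n with h | h
    · have h1 : ¬ Even (n + 1) := by simp [Nat.even_add_one, h]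
      simp only [g, h, h1, if_true, if_false]
      push_cast; ring
    · have h0 : ¬ Even n := Nat.not_even_iff_odd.mpr h
      have h1 : Even (n + 1) := Nat.even_add_one.mpr h0
      simp only [g, h0, h1, if_true, if_false]
      push_cast; ring

private lemma Cform (n : ℕ) :
    12 * ∑ y ∈ Finset.HasAntidiagonal.antidiagonal n, (y.1 : ℤ) * g y.2 =
      if Even n then (n : ℤ) ^ 3 - 4 * n else (n : ℤ) ^ 3 - n := by
  have hswap : ∑ y ∈ Finset.HasAntidiagonal.antidiagonal n, (y.1 : ℤ) * g y.2 =
      ∑ y ∈ Finset.HasAntidiagonal.antidiagonal n, (y.2 : ℤ) * g y.1 := by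
    exact (Finset.Nat.sum_antidiagonal_swap (f := fun y => (y.1 : ℤ) * g y.2)).symm
  rw [hswap, Finset.Nat.sum_antidiagonal_eq_sum_range_succ_mk]
  have h : ∀ i ∈ Finset.range (n + 1),
      ((n - i : ℕ) : ℤ) * g i = (n : ℤ) * g i - (i : ℤ) * g i := by
    intro i hi
    have hle : i ≤ n := by
      have := Finset.mem_range.mp hi; omega
    rw [Nat.cast_sub hle]; ring
  rw [Finset.sum_congr rfl h, Finset.sum_sub_distrib, ← Finset.mul_sum]
  have e1 := E1 n
  have e2 := E2 n
  rcases Nat.even_or_odd n with hn | hn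
  · rw [if_pos hn] at e1 e2 ⊢
    linear_combination (3 * (n : ℤ)) * e1 - 2 * e2
  · have hn' : ¬ Even n := Nat.not_even_iff_odd.mpr hn
    rw [if_neg hn'] at e1 e2 ⊢
    linear_combination (3 * (n : ℤ)) * e1 - 2 * e2

private lemma Aform (n : ℕ) :
    12 * Af n = if Even n then (n : ℤ) ^ 3 + 8 * n else (n : ℤ) ^ 3 - n := by
  unfold Af
  rw [corr n g, mul_add]
  have hc := Cform n
  rcases Nat.even_or_odd n with hn | hn
  · rw [if_pos hn] at hc ⊢
    have hg : g n = (n : ℤ) := if_pos hn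
    rw [hg]
    linear_combination hc
  · have hn' : ¬ Even n := Nat.not_even_iff_odd.mpr hn
    rw [if_neg hn'] at hc ⊢
    have hg : g n = 0 := if_neg hn'
    rw [hg]
    linear_combination hc

private lemma Tform (k : ℕ) :
    48 * ∑ i ∈ Finset.range (k + 1), Af i =
      if Even k then (k : ℤ) ^ 4 + 2 * (k : ℤ) ^ 3 + 8 * (k : ℤ) ^ 2 + 16 * k
      else (k : ℤ) ^ 4 + 2 * (k : ℤ) ^ 3 + 8 * (k : ℤ) ^ 2 - 2 * k - 9 := by
  induction k with
  | zero => simp [Af, g]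
  | succ n ih =>
    rw [Finset.sum_range_succ, mul_add]
    have ha := Aform (n + 1)
    rcases Nat.even_or_odd n with h | h
    · have h1 : ¬ Even (n + 1) := by simp [Nat.even_add_one, h]
      rw [if_pos h] at ih
      rw [if_neg h1] at ha ⊢
      push_cast at ha ⊢
      linear_combination ih + 4 * ha
    · have h0 : ¬ Even n := Nat.not_even_iff_odd.mpr h
      have h1 : Even (n + 1) := Nat.even_add_one.mpr h0
      rw [if_neg h0] at ih
      rw [if_pos h1] at ha ⊢
      push_cast at ha ⊢
      linear_combination ih + 4 * ha

private lemma Uform (k : ℕ) :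
    240 * ∑ i ∈ Finset.range (k + 1), (i : ℤ) * Af i =
      if Even k then 4 * (k : ℤ) ^ 5 + 10 * (k : ℤ) ^ 4 + 30 * (k : ℤ) ^ 3
          + 80 * (k : ℤ) ^ 2 + 56 * k
      else 4 * (k : ℤ) ^ 5 + 10 * (k : ℤ) ^ 4 + 30 * (k : ℤ) ^ 3
          - 10 * (k : ℤ) ^ 2 - 34 * k := by
  induction k with
  | zero => simp [Af, g]
  | succ n ih =>
    rw [Finset.sum_range_succ, mul_add]
    have ha := Aform (n + 1)
    rcases Nat.even_or_odd n with h | h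
    · have h1 : ¬ Even (n + 1) := by simp [Nat.even_add_one, h]
      rw [if_pos h] at ih
      rw [if_neg h1] at ha ⊢
      push_cast at ha ⊢
      linear_combination ih + (20 * ((n : ℤ) + 1)) * ha
    · have h0 : ¬ Even n := Nat.not_even_iff_odd.mpr h
      have h1 : Even (n + 1) := Nat.even_add_one.mpr h0
      rw [if_neg h0] at ih
      rw [if_pos h1] at ha ⊢
      push_cast at ha ⊢
      linear_combination ih + (20 * ((n : ℤ) + 1)) * ha

private lemma Dform (k : ℕ) :
    240 * ∑ y ∈ Finset.HasAntidiagonal.antidiagonal k, (y.1 : ℤ) * Af y.2 =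
      if Even k then (k : ℤ) ^ 5 + 10 * (k : ℤ) ^ 3 - 56 * k
      else (k : ℤ) ^ 5 + 10 * (k : ℤ) ^ 3 - 11 * k := by
  have hswap : ∑ y ∈ Finset.HasAntidiagonal.antidiagonal k, (y.1 : ℤ) * Af y.2 =
      ∑ y ∈ Finset.HasAntidiagonal.antidiagonal k, (y.2 : ℤ) * Af y.1 := by
    exact (Finset.Nat.sum_antidiagonal_swap (f := fun y => (y.1 : ℤ) * Af y.2)).symm
  rw [hswap, Finset.Nat.sum_antidiagonal_eq_sum_range_succ_mk]
  have h : ∀ i ∈ Finset.range (k + 1),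
      ((k - i : ℕ) : ℤ) * Af i = (k : ℤ) * Af i - (i : ℤ) * Af i := by
    intro i hi
    have hle : i ≤ k := by
      have := Finset.mem_range.mp hi; omega
    rw [Nat.cast_sub hle]; ring
  rw [Finset.sum_congr rfl h, Finset.sum_sub_distrib, ← Finset.mul_sum]
  have ht := Tform k
  have hu := Uform k
  rcases Nat.even_or_odd k with hn | hn
  · rw [if_pos hn] at ht hu ⊢
    linear_combination (5 * (k : ℤ)) * ht - hu
  · have hn' : ¬ Even k := Nat.not_even_iff_odd.mpr hn
    rw [if_neg hn'] at ht hu ⊢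
    linear_combination (5 * (k : ℤ)) * ht - hu

/-- Closed form for `B_{0,0}(k)` for even `k`: `240 * ∑_{p+q+r=k, r even} n̄(p) n̄(q) r
= k^5 + 30 k^3 + 104 k`, where `n̄(0)=1, n̄(p)=p`. -/
theorem B_zero_zero_even (k : ℕ) (hk : Even k) :
    (240 : ℤ) * ∑ x ∈ Finset.HasAntidiagonal.antidiagonal k,
        ∑ y ∈ (Finset.HasAntidiagonal.antidiagonal x.2).filter (fun y => Even y.2),
          (if x.1 = 0 then 1 else (x.1 : ℤ)) * (if y.1 = 0 then 1 else (y.1 : ℤ)) * y.2 =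
      (k : ℤ) ^ 5 + 30 * (k : ℤ) ^ 3 + 104 * k := by
  have hinner : ∀ x ∈ Finset.HasAntidiagonal.antidiagonal k,
      (∑ y ∈ (Finset.HasAntidiagonal.antidiagonal x.2).filter (fun y => Even y.2),
          (if x.1 = 0 then 1 else (x.1 : ℤ)) * (if y.1 = 0 then 1 else (y.1 : ℤ)) * y.2) =
        (if x.1 = 0 then 1 else (x.1 : ℤ)) * Af x.2 := by
    intro x _
    rw [Finset.sum_filter, Af, Finset.mul_sum]
    refine Finset.sum_congr rfl ?_
    intro y _
    by_cases h : Even y.2 <;> simp [g, h] <;> ring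
  rw [Finset.sum_congr rfl hinner, corr k Af, mul_add]
  have hd := Dform k
  have ha := Aform k
  rw [if_pos hk] at hd ha
  linear_combination hd + 20 * ha
end

section
/- For every even natural number b, 24 times the sum of n-bar(i) * m over all pairs of natural numbers (i, m) with 2*i + m = b and m even equals b^3 + 20*b, where n-bar(i) = i if i > 0 and n-bar(0) = 1. -/
lemma s1_aux (k : ℕ) :
    2 * ∑ i ∈ Finset.range (k + 1), (if i = 0 then 1 else (i : ℤ)) =
      (k : ℤ)^2 + k + 2 := by
  induction k with
  | zero => simp
  | succ n ih =>
    rw [Finset.sum_range_succ, mul_add, ih]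
    simp [Nat.succ_ne_zero]
    push_cast
    ring

lemma s2_aux (k : ℕ) :
    6 * ∑ i ∈ Finset.range (k + 1), (if i = 0 then 1 else (i : ℤ)) * i =
      2 * (k : ℤ)^3 + 3 * k^2 + k := by
  induction k with
  | zero => simp
  | succ n ih =>
    rw [Finset.sum_range_succ, mul_add, ih]
    simp [Nat.succ_ne_zero]
    push_cast
    ring

/-- For even `b`: `24 * ∑_{2i+m=b, m even} n̄(i) * m = b^3 + 20 b`,
where `n̄(0)=1, n̄(i)=i`. -/
theorem torus_sum_closed_form (b : ℕ) (hb : Even b) :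
    (24 : ℤ) * ∑ x ∈ (Finset.range (b + 1) ×ˢ Finset.range (b + 1)).filter
        (fun x => 2 * x.1 + x.2 = b ∧ Even x.2),
        (if x.1 = 0 then 1 else (x.1 : ℤ)) * x.2 =
      (b : ℤ) ^ 3 + 20 * b := by
  obtain ⟨k, hk⟩ := hb
  subst hk
  have key : ∑ x ∈ (Finset.range (k + k + 1) ×ˢ Finset.range (k + k + 1)).filter
        (fun x => 2 * x.1 + x.2 = k + k ∧ Even x.2),
        (if x.1 = 0 then 1 else (x.1 : ℤ)) * x.2 =
      ∑ i ∈ Finset.range (k + 1),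
        (if i = 0 then 1 else (i : ℤ)) * (2 * (k : ℤ) - 2 * i) := by
    apply Finset.sum_nbij' (i := fun x => x.1) (j := fun i => (i, k + k - 2 * i))
    · intro a ha
      simp only [Finset.mem_filter, Finset.mem_product, Finset.mem_range] at ha
      simp only [Finset.mem_range]
      omega
    · intro i hi
      simp only [Finset.mem_range] at hi
      simp only [Finset.mem_filter, Finset.mem_product, Finset.mem_range]
      refine ⟨⟨by omega, by omega⟩, by omega, ?_⟩
      exact ⟨k - i, by omega⟩
    · intro a ha
      simp only [Finset.mem_filter, Finset.mem_product, Finset.mem_range] at ha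
      ext <;> simp <;> omega
    · intro i hi; rfl
    · intro a ha
      simp only [Finset.mem_filter, Finset.mem_product, Finset.mem_range] at ha
      congr 1
      have : (a.2 : ℤ) = 2 * k - 2 * a.1 := by
        have := ha.2.1
        omega
      rw [this]
  rw [key]
  have expand : ∀ i : ℕ, (if i = 0 then 1 else (i : ℤ)) * (2 * (k : ℤ) - 2 * i) =
      2 * k * (if i = 0 then 1 else (i : ℤ)) - 2 * ((if i = 0 then 1 else (i : ℤ)) * i) := by
    intro i; split <;> simp_all <;> ring
  simp only [expand]
  rw [Finset.sum_sub_distrib, ← Finset.mul_sum, ← Finset.mul_sum]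
  have h1 := s1_aux k
  have h2 := s2_aux k
  push_cast
  nlinarith [h1, h2]
end

section
/- For every natural number m, there exist polynomials P and Q with rational coefficients, each of degree 2m + 3 and each odd (P(-x) = -P(x) and Q(-x) = -Q(x)), such that for every even natural number k the sum of p^(2m+1) * q over pairs of natural numbers (p,q) with p + q = k and q even equals P evaluated at k, and for every odd natural number k this sum equals Q evaluated at k. -/
open Polynomial Finset

namespace SmQP

lemma bern_natDegree_le (n : ℕ) : (Polynomial.bernoulli n).natDegree ≤ n := by
  rw [Polynomial.bernoulli_def]
  apply Polynomial.natDegree_sum_le_of_forall_le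
  intro i hi
  exact (Polynomial.natDegree_monomial_le _).trans (Nat.lt_succ_iff.mp (Finset.mem_range.mp hi))

lemma bern_coeff_top (n : ℕ) : (Polynomial.bernoulli n).coeff n = 1 := by
  rw [Polynomial.bernoulli_def, Polynomial.finset_sum_coeff]
  rw [Finset.sum_eq_single n]
  · simp [Polynomial.coeff_monomial]
  · intro i _ hi0
    rw [Polynomial.coeff_monomial, if_neg hi0]
  · intro h
    exact absurd (Finset.self_mem_range_succ n) h

lemma bern_natDegree (n : ℕ) : (Polynomial.bernoulli n).natDegree = n := by
  have hne : (Polynomial.bernoulli n).coeff n ≠ 0 := by rw [bern_coeff_top]; norm_num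
  exact le_antisymm (bern_natDegree_le n) (Polynomial.le_natDegree_of_ne_zero hne)

lemma bern_monic (n : ℕ) : (Polynomial.bernoulli n).Monic := by
  unfold Polynomial.Monic Polynomial.leadingCoeff
  rw [bern_natDegree, bern_coeff_top]

/-- discrete antiderivative of the monomial `X^r`. -/
noncomputable def phiMono (r : ℕ) : ℚ[X] :=
  (((r : ℚ) + 1)⁻¹) • ((Polynomial.bernoulli (r + 1)).comp (X + C 1) -
    C ((Polynomial.bernoulli (r + 1)).eval 0))

lemma r1_ne (r : ℕ) : ((r : ℚ) + 1) ≠ 0 := by positivity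

lemma phiMono_eval (r : ℕ) (x : ℚ) :
    (phiMono r).eval x = ((r : ℚ) + 1)⁻¹ *
      ((Polynomial.bernoulli (r + 1)).eval (x + 1) - (Polynomial.bernoulli (r + 1)).eval 0) := by
  simp [phiMono, Polynomial.eval_comp]

lemma phiMono_eval_zero (r : ℕ) : (phiMono r).eval 0 = (0 : ℚ) ^ r := by
  rw [phiMono_eval]
  have h := Polynomial.bernoulli_eval_one_add (r + 1) (0 : ℚ)
  simp only [add_zero, zero_add, Nat.add_sub_cancel] at h ⊢
  rw [h]
  push_cast
  field_simp
  ring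

lemma phiMono_delta (r : ℕ) (x : ℚ) :
    (phiMono r).eval x - (phiMono r).eval (x - 1) = x ^ r := by
  rw [phiMono_eval, phiMono_eval]
  have h := Polynomial.bernoulli_eval_one_add (r + 1) x
  have hx : x - 1 + 1 = x := by ring
  rw [hx, add_comm x 1, h]
  simp only [Nat.add_sub_cancel]
  push_cast
  field_simp
  ring

lemma phiMono_natDegree_le (r : ℕ) : (phiMono r).natDegree ≤ r + 1 := by
  apply (Polynomial.natDegree_smul_le _ _).trans
  apply (Polynomial.natDegree_sub_le _ _).trans
  simp only [Polynomial.natDegree_C, max_le_iff]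
  constructor
  · apply Polynomial.natDegree_comp_le.trans
    have : (X + C (1:ℚ)).natDegree = 1 := by
      simpa using Polynomial.natDegree_X_add_C (1:ℚ)
    rw [this, mul_one]
    exact bern_natDegree_le _
  · omega

lemma phiMono_coeff_top (r : ℕ) : (phiMono r).coeff (r + 1) = ((r : ℚ) + 1)⁻¹ := by
  have hq : (X + C (1:ℚ)).Monic := Polynomial.monic_X_add_C 1
  have hqd : (X + C (1:ℚ)).natDegree = 1 := by simpa using Polynomial.natDegree_X_add_C (1:ℚ)
  have hcomp : ((Polynomial.bernoulli (r+1)).comp (X + C 1)).Monic :=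
    (bern_monic (r+1)).comp hq (by rw [hqd]; norm_num)
  have hdeg : ((Polynomial.bernoulli (r+1)).comp (X + C 1)).natDegree = r + 1 := by
    rw [Polynomial.natDegree_comp, hqd, bern_natDegree, mul_one]
  have hc : ((Polynomial.bernoulli (r+1)).comp (X + C 1)).coeff (r+1) = 1 := by
    have := hcomp.leadingCoeff
    rwa [Polynomial.leadingCoeff, hdeg] at this
  rw [phiMono, Polynomial.coeff_smul, Polynomial.coeff_sub, hc, Polynomial.coeff_C,
    if_neg (Nat.succ_ne_zero r)]
  simp

/-- discrete antiderivative of a polynomial. -/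
noncomputable def antider (φ : ℚ[X]) : ℚ[X] :=
  ∑ i ∈ Finset.range (φ.natDegree + 1), φ.coeff i • phiMono i

lemma antider_eval_zero (φ : ℚ[X]) : (antider φ).eval 0 = φ.eval 0 := by
  rw [antider, Polynomial.eval_finset_sum]
  rw [Polynomial.eval_eq_sum_range]
  apply Finset.sum_congr rfl
  intro i _
  rw [Polynomial.eval_smul, phiMono_eval_zero, smul_eq_mul]

lemma antider_delta (φ : ℚ[X]) (x : ℚ) :
    (antider φ).eval x - (antider φ).eval (x - 1) = φ.eval x := by
  rw [antider, Polynomial.eval_finset_sum, Polynomial.eval_finset_sum, ← Finset.sum_sub_distrib]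
  rw [Polynomial.eval_eq_sum_range]
  apply Finset.sum_congr rfl
  intro i _
  rw [Polynomial.eval_smul, Polynomial.eval_smul, smul_eq_mul, smul_eq_mul, ← mul_sub,
    phiMono_delta]

lemma antider_natDegree_le (φ : ℚ[X]) : (antider φ).natDegree ≤ φ.natDegree + 1 := by
  apply Polynomial.natDegree_sum_le_of_forall_le
  intro i hi
  apply (Polynomial.natDegree_smul_le _ _).trans
  have : i ≤ φ.natDegree := Nat.lt_succ_iff.mp (Finset.mem_range.mp hi)
  exact (phiMono_natDegree_le i).trans (by omega)

lemma antider_coeff_top (φ : ℚ[X]) :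
    (antider φ).coeff (φ.natDegree + 1) = φ.leadingCoeff * ((φ.natDegree : ℚ) + 1)⁻¹ := by
  rw [antider, Polynomial.finset_sum_coeff]
  rw [Finset.sum_eq_single φ.natDegree]
  · rw [Polynomial.coeff_smul, phiMono_coeff_top, smul_eq_mul, Polynomial.leadingCoeff]
  · intro i hi hne
    have hlt : i < φ.natDegree := lt_of_le_of_ne (Nat.lt_succ_iff.mp (Finset.mem_range.mp hi)) hne
    rw [Polynomial.coeff_smul, Polynomial.coeff_eq_zero_of_natDegree_lt
      ((phiMono_natDegree_le i).trans_lt (by omega)), smul_zero]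
  · intro h
    exact absurd (Finset.self_mem_range_succ _) h

lemma antider_eval_nat (φ : ℚ[X]) (n : ℕ) :
    (antider φ).eval (n : ℚ) = ∑ i ∈ Finset.range (n + 1), φ.eval (i : ℚ) := by
  induction n with
  | zero => simpa using antider_eval_zero φ
  | succ n ih =>
    have h := antider_delta φ ((n : ℚ) + 1)
    have hx : ((n : ℚ) + 1) - 1 = (n : ℚ) := by ring
    rw [hx] at h
    rw [Finset.sum_range_succ, ← ih]
    push_cast
    linarith [h]

/-- two polynomials with the same discrete difference and the same value at 0 are equal -/
lemma unique_antider (Φ₁ Φ₂ : ℚ[X]) (h0 : Φ₁.eval 0 = Φ₂.eval 0)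
    (hΔ : ∀ x : ℚ, Φ₁.eval x - Φ₁.eval (x - 1) = Φ₂.eval x - Φ₂.eval (x - 1)) :
    Φ₁ = Φ₂ := by
  have hnat : ∀ n : ℕ, Φ₁.eval (n : ℚ) = Φ₂.eval (n : ℚ) := by
    intro n
    induction n with
    | zero => simpa using h0
    | succ n ih =>
      have h := hΔ ((n : ℚ) + 1)
      have hx : ((n : ℚ) + 1) - 1 = (n : ℚ) := by ring
      rw [hx] at h
      push_cast
      linarith [h]
  apply Polynomial.eq_of_infinite_eval_eq
  apply Set.Infinite.mono (s := Set.range (Nat.cast : ℕ → ℚ))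
  · rintro x ⟨n, rfl⟩
    exact hnat n
  · exact Set.infinite_range_of_injective Nat.cast_injective

lemma sum_filter_eq (m k : ℕ) :
    ∑ x ∈ (Finset.HasAntidiagonal.antidiagonal k).filter (fun x => Even x.2), x.1 ^ (2*m+1) * x.2
    = ∑ j ∈ Finset.range (k/2 + 1), (k - 2*j)^(2*m+1) * (2*j) := by
  symm
  apply Finset.sum_bij' (i := fun j _ => ((k - 2*j, 2*j) : ℕ × ℕ))
    (j := fun x _ => x.2 / 2)
  · intro j hj
    have hjk : 2*j ≤ k := by
      have := Finset.mem_range.mp hj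
      omega
    rw [Finset.mem_filter, Finset.HasAntidiagonal.mem_antidiagonal]
    exact ⟨by omega, ⟨j, by omega⟩⟩
  · intro x hx
    rw [Finset.mem_filter, Finset.HasAntidiagonal.mem_antidiagonal] at hx
    obtain ⟨h1, t, ht⟩ := hx
    rw [Finset.mem_range]
    omega
  · intro j hj
    have := Finset.mem_range.mp hj
    simp only []
    omega
  · intro x hx
    rw [Finset.mem_filter, Finset.HasAntidiagonal.mem_antidiagonal] at hx
    obtain ⟨h1, t, ht⟩ := hx
    have h2 : 2 * (x.2 / 2) = x.2 := by omega
    have h1' : k - 2 * (x.2/2) = x.1 := by omega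
    rw [h2, show k - x.2 = x.1 by omega]
  · intro j hj
    simp only []



noncomputable def polyA (m : ℕ) : ℚ[X] := antider (X ^ (2*m+1))
noncomputable def polyB (m : ℕ) : ℚ[X] := antider (X ^ (2*m+2))
noncomputable def phi1 (m : ℕ) : ℚ[X] := (C 2 * X + C 1) ^ (2*m+1)
noncomputable def polyT (m : ℕ) : ℚ[X] := antider (phi1 m)
noncomputable def polyU (m : ℕ) : ℚ[X] := antider (X * phi1 m)
noncomputable def fE (m : ℕ) : ℚ[X] := X * polyA m - polyB m
noncomputable def gE (m : ℕ) : ℚ[X] := C 2 * (X * polyT m - polyU m)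
noncomputable def Pm (m : ℕ) : ℚ[X] :=
  C ((2:ℚ)^(2*m+2)) * (fE m).comp (C (2⁻¹:ℚ) * X + C 0)
noncomputable def Qm (m : ℕ) : ℚ[X] :=
  (gE m).comp (C (2⁻¹:ℚ) * X + C (-(2⁻¹:ℚ)))

lemma hA_delta (m : ℕ) (x : ℚ) :
    (polyA m).eval x - (polyA m).eval (x-1) = x^(2*m+1) := by
  have h := antider_delta (X ^ (2*m+1) : ℚ[X]) x
  rw [show antider (X ^ (2*m+1) : ℚ[X]) = polyA m from rfl] at h
  simpa using h

lemma hB_delta (m : ℕ) (x : ℚ) :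
    (polyB m).eval x - (polyB m).eval (x-1) = x^(2*m+2) := by
  have h := antider_delta (X ^ (2*m+2) : ℚ[X]) x
  rw [show antider (X ^ (2*m+2) : ℚ[X]) = polyB m from rfl] at h
  simpa using h

lemma phi1_eval (m : ℕ) (x : ℚ) : (phi1 m).eval x = (2*x+1)^(2*m+1) := by
  simp [phi1]

lemma hT_delta (m : ℕ) (x : ℚ) :
    (polyT m).eval x - (polyT m).eval (x-1) = (2*x+1)^(2*m+1) := by
  have := antider_delta (phi1 m) x
  rw [show antider (phi1 m) = polyT m from rfl] at this
  rwa [phi1_eval] at this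

lemma hU_delta (m : ℕ) (x : ℚ) :
    (polyU m).eval x - (polyU m).eval (x-1) = x * (2*x+1)^(2*m+1) := by
  have := antider_delta (X * phi1 m) x
  rw [show antider (X * phi1 m) = polyU m from rfl] at this
  rwa [Polynomial.eval_mul, Polynomial.eval_X, phi1_eval] at this

lemma hA_nat (m n : ℕ) :
    (polyA m).eval (n:ℚ) = ∑ i ∈ Finset.range (n+1), (i:ℚ)^(2*m+1) := by
  have h := antider_eval_nat (X ^ (2*m+1) : ℚ[X]) n
  rw [show antider (X ^ (2*m+1) : ℚ[X]) = polyA m from rfl] at h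
  simpa using h

lemma hB_nat (m n : ℕ) :
    (polyB m).eval (n:ℚ) = ∑ i ∈ Finset.range (n+1), (i:ℚ)^(2*m+2) := by
  have h := antider_eval_nat (X ^ (2*m+2) : ℚ[X]) n
  rw [show antider (X ^ (2*m+2) : ℚ[X]) = polyB m from rfl] at h
  simpa using h

lemma hT_nat (m n : ℕ) :
    (polyT m).eval (n:ℚ) = ∑ i ∈ Finset.range (n+1), (2*(i:ℚ)+1)^(2*m+1) := by
  have := antider_eval_nat (phi1 m) n
  rw [show antider (phi1 m) = polyT m from rfl] at this
  simp only [phi1_eval] at this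
  exact this

lemma hU_nat (m n : ℕ) :
    (polyU m).eval (n:ℚ) = ∑ i ∈ Finset.range (n+1), (i:ℚ) * (2*(i:ℚ)+1)^(2*m+1) := by
  have := antider_eval_nat (X * phi1 m) n
  rw [show antider (X * phi1 m) = polyU m from rfl] at this
  simp only [Polynomial.eval_mul, Polynomial.eval_X, phi1_eval] at this
  exact this

lemma hA_refl (m : ℕ) (x : ℚ) : (polyA m).eval (-x) = (polyA m).eval (x-1) := by
  have key : (polyA m).comp (-X) = (polyA m).comp (X - C 1) := by
    apply unique_antider
    · simp only [Polynomial.eval_comp, Polynomial.eval_neg, Polynomial.eval_X,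
        Polynomial.eval_sub, Polynomial.eval_C, neg_zero, zero_sub]
      have h := hA_delta m 0
      have h0 : (0:ℚ)^(2*m+1) = 0 := zero_pow (by omega)
      rw [h0] at h
      have e : (0:ℚ) - 1 = -1 := by ring
      rw [e] at h
      linarith
    · intro y
      simp only [Polynomial.eval_comp, Polynomial.eval_neg, Polynomial.eval_X,
        Polynomial.eval_sub, Polynomial.eval_C]
      have h1 := hA_delta m (1-y)
      have e1 : (1:ℚ)-y-1 = -y := by ring
      rw [e1] at h1
      have h2 := hA_delta m (y-1)
      have e2 : -(y-1) = 1-y := by ring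
      rw [e2]
      have hodd : ((1:ℚ)-y)^(2*m+1) = -((y-1)^(2*m+1)) := by
        rw [show (1:ℚ)-y = -(y-1) by ring, Odd.neg_pow ⟨m, by ring⟩]
      linarith
  have := congrArg (Polynomial.eval x) key
  simpa [Polynomial.eval_comp] using this

lemma hB_refl (m : ℕ) (x : ℚ) : (polyB m).eval (-x) = -((polyB m).eval (x-1)) := by
  have hB0 : (polyB m).eval 0 = 0 := by
    have := antider_eval_zero (X ^ (2*m+2) : ℚ[X])
    simpa [polyB] using this
  have key : (polyB m).comp (-X) = -((polyB m).comp (X - C 1)) := by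
    apply unique_antider
    · simp only [Polynomial.eval_comp, Polynomial.eval_neg, Polynomial.eval_X,
        Polynomial.eval_sub, Polynomial.eval_C, neg_zero, zero_sub]
      have h := hB_delta m 0
      have h0 : (0:ℚ)^(2*m+2) = 0 := zero_pow (by omega)
      rw [h0] at h
      have e : (0:ℚ) - 1 = -1 := by ring
      rw [e] at h
      rw [hB0] at h ⊢
      linarith
    · intro y
      simp only [Polynomial.eval_comp, Polynomial.eval_neg, Polynomial.eval_X,
        Polynomial.eval_sub, Polynomial.eval_C]
      have h1 := hB_delta m (1-y)
      have e1 : (1:ℚ)-y-1 = -y := by ring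
      rw [e1] at h1
      have h2 := hB_delta m (y-1)
      have e2 : -(y-1) = 1-y := by ring
      rw [e2]
      have heven : ((1:ℚ)-y)^(2*m+2) = (y-1)^(2*m+2) := by
        rw [show (1:ℚ)-y = -(y-1) by ring, Even.neg_pow ⟨m+1, by ring⟩]
      linarith
  have := congrArg (Polynomial.eval x) key
  simpa [Polynomial.eval_comp] using this

lemma hT0 : ∀ m : ℕ, (polyT m).eval (-1) = 0 := by
  intro m
  have h := hT_delta m 0
  have hz : (polyT m).eval 0 = 1 := by
    have := antider_eval_zero (phi1 m)
    rw [phi1_eval] at this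
    simpa [polyT] using this
  have e : (0:ℚ) - 1 = -1 := by ring
  rw [e, hz] at h
  have : (2*(0:ℚ)+1)^(2*m+1) = 1 := by norm_num
  rw [this] at h
  linarith

lemma hU0 : ∀ m : ℕ, (polyU m).eval (-1) = 0 := by
  intro m
  have h := hU_delta m 0
  have hz : (polyU m).eval 0 = 0 := by
    have := antider_eval_zero (X * phi1 m)
    simpa [polyU] using this
  have e : (0:ℚ) - 1 = -1 := by ring
  rw [e, hz] at h
  simpa using h

lemma hT_refl (m : ℕ) (x : ℚ) : (polyT m).eval (-1-x) = (polyT m).eval (x-1) := by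
  have key : (polyT m).comp (C (-1) - X) = (polyT m).comp (X - C 1) := by
    apply unique_antider
    · norm_num
    · intro y
      simp only [Polynomial.eval_comp, Polynomial.eval_neg, Polynomial.eval_X,
        Polynomial.eval_sub, Polynomial.eval_C]
      have h1 := hT_delta m (-y)
      have e1 : -y - 1 = -1 - y := by ring
      rw [e1] at h1
      have h2 := hT_delta m (y-1)
      have e2 : (-1:ℚ) - (y-1) = -y := by ring
      rw [e2]
      have hodd : (2*(-y)+1)^(2*m+1) = -((2*(y-1)+1)^(2*m+1)) := by
        rw [show 2*(-y)+1 = -(2*(y-1)+1) by ring, Odd.neg_pow ⟨m, by ring⟩]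
      rw [hodd] at h1
      linarith
  have := congrArg (Polynomial.eval x) key
  simpa [Polynomial.eval_comp, sub_eq_add_neg, add_comm] using this

lemma hU_refl (m : ℕ) (x : ℚ) :
    (polyU m).eval (-1-x) = -((polyU m).eval (x-1)) - (polyT m).eval (x-1) := by
  have key : (polyU m).comp (C (-1) - X)
      = -((polyU m).comp (X - C 1)) - (polyT m).comp (X - C 1) := by
    apply unique_antider
    · simp only [Polynomial.eval_comp, Polynomial.eval_neg, Polynomial.eval_X,
        Polynomial.eval_sub, Polynomial.eval_C]
      norm_num [hT0 m, hU0 m]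
    · intro y
      simp only [Polynomial.eval_comp, Polynomial.eval_neg, Polynomial.eval_X,
        Polynomial.eval_sub, Polynomial.eval_C]
      have h1 := hU_delta m (-y)
      have e1 : -y - 1 = -1 - y := by ring
      rw [e1] at h1
      have hU2 := hU_delta m (y-1)
      have hT2 := hT_delta m (y-1)
      have e2 : (-1:ℚ) - (y-1) = -y := by ring
      rw [e2]
      have hodd : (2*(-y)+1)^(2*m+1) = -((2*(y-1)+1)^(2*m+1)) := by
        rw [show 2*(-y)+1 = -(2*(y-1)+1) by ring, Odd.neg_pow ⟨m, by ring⟩]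
      rw [hodd] at h1
      linear_combination -h1 + hU2 + hT2
  have := congrArg (Polynomial.eval x) key
  simpa [Polynomial.eval_comp, sub_eq_add_neg, add_comm] using this

lemma fE_odd (m : ℕ) (y : ℚ) : (fE m).eval (-y) = -((fE m).eval y) := by
  simp only [fE, Polynomial.eval_sub, Polynomial.eval_mul, Polynomial.eval_X]
  rw [hA_refl, hB_refl]
  linear_combination y * hA_delta m y - hB_delta m y

lemma gE_refl (m : ℕ) (y : ℚ) : (gE m).eval (-1-y) = -((gE m).eval y) := by
  simp only [gE, Polynomial.eval_mul, Polynomial.eval_C, Polynomial.eval_sub,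
    Polynomial.eval_X]
  rw [hT_refl, hU_refl]
  linear_combination 2 * y * hT_delta m y - 2 * hU_delta m y

lemma degree_of_coeff (p : ℚ[X]) (D : ℕ) (hle : p.natDegree ≤ D) (hc : p.coeff D ≠ 0) :
    p.degree = (D : ℕ) := by
  have hD : p.natDegree = D := le_antisymm hle (Polynomial.le_natDegree_of_ne_zero hc)
  have hp : p ≠ 0 := by intro h; rw [h] at hc; simp at hc
  rw [Polynomial.degree_eq_natDegree hp, hD]

lemma degree_comp_linear (p : ℚ[X]) (D : ℕ) (hd : p.degree = (D : ℕ)) (a b : ℚ) (ha : a ≠ 0) :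
    (p.comp (C a * X + C b)).degree = (D : ℕ) := by
  have hp : p ≠ 0 := by
    intro h
    rw [h, Polynomial.degree_zero] at hd
    simp at hd
  have hpD : p.natDegree = D := Polynomial.natDegree_eq_of_degree_eq_some hd
  have hq1 : (C a * X + C b).natDegree = 1 := Polynomial.natDegree_linear ha
  have hnd : (p.comp (C a * X + C b)).natDegree = D := by
    rw [Polynomial.natDegree_comp, hq1, hpD, mul_one]
  have hlc : (p.comp (C a * X + C b)).leadingCoeff ≠ 0 := by
    rw [Polynomial.leadingCoeff_comp (by rw [hq1]; norm_num)]
    exact mul_ne_zero (Polynomial.leadingCoeff_ne_zero.mpr hp)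
      (pow_ne_zero _ (by rw [Polynomial.leadingCoeff_linear ha]; exact ha))
  have hne := Polynomial.leadingCoeff_ne_zero.mp hlc
  rw [Polynomial.degree_eq_natDegree hne, hnd]

lemma A_coeff (m : ℕ) : (polyA m).coeff (2*m+2) = ((2*m+2 : ℚ))⁻¹ := by
  have h := antider_coeff_top (X ^ (2*m+1) : ℚ[X])
  rw [Polynomial.natDegree_X_pow, Polynomial.leadingCoeff_X_pow, one_mul] at h
  rw [show antider (X ^ (2*m+1) : ℚ[X]) = polyA m from rfl] at h
  rw [show 2*m+1+1 = 2*m+2 by ring] at h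
  rw [h]
  push_cast
  ring_nf

lemma B_coeff (m : ℕ) : (polyB m).coeff (2*m+3) = ((2*m+3 : ℚ))⁻¹ := by
  have h := antider_coeff_top (X ^ (2*m+2) : ℚ[X])
  rw [Polynomial.natDegree_X_pow, Polynomial.leadingCoeff_X_pow, one_mul] at h
  rw [show antider (X ^ (2*m+2) : ℚ[X]) = polyB m from rfl] at h
  rw [show 2*m+2+1 = 2*m+3 by ring] at h
  rw [h]
  push_cast
  ring_nf

lemma A_natDegree_le (m : ℕ) : (polyA m).natDegree ≤ 2*m+2 := by
  have := antider_natDegree_le (X ^ (2*m+1) : ℚ[X])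
  rwa [Polynomial.natDegree_X_pow, show antider (X ^ (2*m+1) : ℚ[X]) = polyA m from rfl,
    show 2*m+1+1 = 2*m+2 by ring] at this

lemma B_natDegree_le (m : ℕ) : (polyB m).natDegree ≤ 2*m+3 := by
  have := antider_natDegree_le (X ^ (2*m+2) : ℚ[X])
  rwa [Polynomial.natDegree_X_pow, show antider (X ^ (2*m+2) : ℚ[X]) = polyB m from rfl,
    show 2*m+2+1 = 2*m+3 by ring] at this

lemma inv_diff_ne (m : ℕ) : ((2*m+2 : ℚ))⁻¹ - ((2*m+3 : ℚ))⁻¹ ≠ 0 := by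
  have h2 : (0:ℚ) < 2*m+2 := by positivity
  have h3 : (0:ℚ) < 2*m+3 := by positivity
  have : ((2*m+3 : ℚ))⁻¹ < ((2*m+2 : ℚ))⁻¹ := by
    apply inv_strictAnti₀ h2
    linarith
  linarith

lemma fE_natDegree_le (m : ℕ) : (fE m).natDegree ≤ 2*m+3 := by
  apply (Polynomial.natDegree_sub_le _ _).trans
  rw [max_le_iff]
  refine ⟨(Polynomial.natDegree_mul_le).trans ?_, B_natDegree_le m⟩
  have := A_natDegree_le m
  have := Polynomial.natDegree_X_le (R := ℚ)
  omega

lemma fE_coeff (m : ℕ) : (fE m).coeff (2*m+3) = ((2*m+2 : ℚ))⁻¹ - ((2*m+3 : ℚ))⁻¹ := by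
  rw [fE, Polynomial.coeff_sub, show 2*m+3 = (2*m+2)+1 by ring, Polynomial.coeff_X_mul]
  rw [A_coeff, show (2*m+2)+1 = 2*m+3 by ring, B_coeff]

lemma fE_degree (m : ℕ) : (fE m).degree = ((2*m+3 : ℕ) : ℕ) := by
  apply degree_of_coeff _ _ (fE_natDegree_le m)
  rw [fE_coeff]
  exact inv_diff_ne m

lemma phi1_natDegree (m : ℕ) : (phi1 m).natDegree = 2*m+1 := by
  rw [phi1, Polynomial.natDegree_pow, Polynomial.natDegree_linear (two_ne_zero), mul_one]

lemma phi1_leadingCoeff (m : ℕ) : (phi1 m).leadingCoeff = 2^(2*m+1) := by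
  rw [phi1, Polynomial.leadingCoeff_pow, Polynomial.leadingCoeff_linear (two_ne_zero)]

lemma phi1_ne_zero (m : ℕ) : phi1 m ≠ 0 := by
  intro h
  have := phi1_leadingCoeff m
  rw [h, Polynomial.leadingCoeff_zero] at this
  exact absurd this.symm (by positivity)

lemma T_coeff (m : ℕ) : (polyT m).coeff (2*m+2) = 2^(2*m+1) * ((2*m+2 : ℚ))⁻¹ := by
  have h := antider_coeff_top (phi1 m)
  rw [phi1_natDegree, phi1_leadingCoeff] at h
  rw [show antider (phi1 m) = polyT m from rfl, show 2*m+1+1 = 2*m+2 by ring] at h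
  rw [h]
  push_cast
  ring_nf

lemma Xphi1_natDegree (m : ℕ) : (X * phi1 m).natDegree = 2*m+2 := by
  rw [Polynomial.natDegree_mul Polynomial.X_ne_zero (phi1_ne_zero m),
    Polynomial.natDegree_X, phi1_natDegree]
  omega

lemma Xphi1_leadingCoeff (m : ℕ) : (X * phi1 m).leadingCoeff = 2^(2*m+1) := by
  rw [Polynomial.leadingCoeff_mul, Polynomial.leadingCoeff_X, one_mul, phi1_leadingCoeff]

lemma U_coeff (m : ℕ) : (polyU m).coeff (2*m+3) = 2^(2*m+1) * ((2*m+3 : ℚ))⁻¹ := by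
  have h := antider_coeff_top (X * phi1 m)
  rw [Xphi1_natDegree, Xphi1_leadingCoeff] at h
  rw [show antider (X * phi1 m) = polyU m from rfl, show 2*m+2+1 = 2*m+3 by ring] at h
  rw [h]
  push_cast
  ring_nf

lemma T_natDegree_le (m : ℕ) : (polyT m).natDegree ≤ 2*m+2 := by
  have := antider_natDegree_le (phi1 m)
  rwa [phi1_natDegree, show antider (phi1 m) = polyT m from rfl,
    show 2*m+1+1 = 2*m+2 by ring] at this

lemma U_natDegree_le (m : ℕ) : (polyU m).natDegree ≤ 2*m+3 := by
  have := antider_natDegree_le (X * phi1 m)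
  rwa [Xphi1_natDegree, show antider (X * phi1 m) = polyU m from rfl,
    show 2*m+2+1 = 2*m+3 by ring] at this

lemma gE_natDegree_le (m : ℕ) : (gE m).natDegree ≤ 2*m+3 := by
  rw [gE]
  apply (Polynomial.natDegree_mul_le).trans
  rw [Polynomial.natDegree_C, zero_add]
  apply (Polynomial.natDegree_sub_le _ _).trans
  rw [max_le_iff]
  refine ⟨(Polynomial.natDegree_mul_le).trans ?_, U_natDegree_le m⟩
  have := T_natDegree_le m
  have := Polynomial.natDegree_X_le (R := ℚ)
  omega

lemma gE_coeff (m : ℕ) :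
    (gE m).coeff (2*m+3) = 2 * (2^(2*m+1) * (((2*m+2 : ℚ))⁻¹ - ((2*m+3 : ℚ))⁻¹)) := by
  rw [gE, Polynomial.coeff_C_mul, Polynomial.coeff_sub,
    show 2*m+3 = (2*m+2)+1 by ring, Polynomial.coeff_X_mul, T_coeff,
    show (2*m+2)+1 = 2*m+3 by ring, U_coeff]
  ring

lemma gE_degree (m : ℕ) : (gE m).degree = ((2*m+3 : ℕ) : ℕ) := by
  apply degree_of_coeff _ _ (gE_natDegree_le m)
  rw [gE_coeff]
  have h1 := inv_diff_ne m
  have h2 : (0:ℚ) < 2^(2*m+1) := by positivity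
  intro h
  rcases mul_eq_zero.mp h with h | h
  · norm_num at h
  · rcases mul_eq_zero.mp h with h | h
    · exact absurd h (by positivity)
    · exact h1 h

lemma even_sum_nat (m n : ℕ) :
    ∑ j ∈ Finset.range (n+1), ((n+n) - 2*j)^(2*m+1)*(2*j)
    = ∑ j ∈ Finset.range (n+1), (2*j)^(2*m+1)*(2*(n-j)) := by
  rw [← Finset.sum_range_reflect]
  apply Finset.sum_congr rfl
  intro j hj
  have hjn : j ≤ n := Nat.lt_succ_iff.mp (Finset.mem_range.mp hj)
  have e2 : n+1-1-j = n-j := by omega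
  rw [e2, show (n+n) - 2*(n-j) = 2*j by omega]

lemma odd_sum_nat (m n : ℕ) :
    ∑ j ∈ Finset.range (n+1), ((2*n+1) - 2*j)^(2*m+1)*(2*j)
    = ∑ j ∈ Finset.range (n+1), (2*j+1)^(2*m+1)*(2*(n-j)) := by
  rw [← Finset.sum_range_reflect]
  apply Finset.sum_congr rfl
  intro j hj
  have hjn : j ≤ n := Nat.lt_succ_iff.mp (Finset.mem_range.mp hj)
  have e2 : n+1-1-j = n-j := by omega
  rw [e2, show (2*n+1) - 2*(n-j) = 2*j+1 by omega]

lemma even_eval (m n : ℕ) :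
    ((∑ j ∈ Finset.range (n+1), (2*j)^(2*m+1)*(2*(n-j)) : ℕ) : ℚ)
    = 2^(2*m+2) * ((n:ℚ) * (polyA m).eval (n:ℚ) - (polyB m).eval (n:ℚ)) := by
  rw [Nat.cast_sum, hA_nat, hB_nat, Finset.mul_sum, ← Finset.sum_sub_distrib,
    Finset.mul_sum]
  apply Finset.sum_congr rfl
  intro j hj
  have hjn : j ≤ n := Nat.lt_succ_iff.mp (Finset.mem_range.mp hj)
  push_cast [Nat.cast_sub hjn]
  ring

lemma odd_eval (m n : ℕ) :
    ((∑ j ∈ Finset.range (n+1), (2*j+1)^(2*m+1)*(2*(n-j)) : ℕ) : ℚ)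
    = 2 * ((n:ℚ) * (polyT m).eval (n:ℚ) - (polyU m).eval (n:ℚ)) := by
  rw [Nat.cast_sum, hT_nat, hU_nat, Finset.mul_sum, ← Finset.sum_sub_distrib,
    Finset.mul_sum]
  apply Finset.sum_congr rfl
  intro j hj
  have hjn : j ≤ n := Nat.lt_succ_iff.mp (Finset.mem_range.mp hj)
  push_cast [Nat.cast_sub hjn]
  ring

end SmQP

open SmQP Polynomial Finset in
/-- `S_m(k) = ∑_{p+q=k, q even} p^(2m+1) q` is an odd rational quasi-polynomial
of degree `2m+3`, depending on the parity of `k`. -/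
theorem S_m_quasipolynomial (m : ℕ) :
    ∃ P Q : Polynomial ℚ,
      P.degree = (2 * m + 3 : ℕ) ∧ Q.degree = (2 * m + 3 : ℕ) ∧
      (∀ x : ℚ, P.eval (-x) = -P.eval x) ∧
      (∀ x : ℚ, Q.eval (-x) = -Q.eval x) ∧
      (∀ k : ℕ, Even k →
        ((∑ x ∈ (Finset.HasAntidiagonal.antidiagonal k).filter (fun x => Even x.2),
            x.1 ^ (2 * m + 1) * x.2 : ℕ) : ℚ) = P.eval (k : ℚ)) ∧
      (∀ k : ℕ, Odd k →
        ((∑ x ∈ (Finset.HasAntidiagonal.antidiagonal k).filter (fun x => Even x.2),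
            x.1 ^ (2 * m + 1) * x.2 : ℕ) : ℚ) = Q.eval (k : ℚ)) := by
  refine ⟨Pm m, Qm m, ?_, ?_, ?_, ?_, ?_, ?_⟩
  · rw [Pm, Polynomial.degree_C_mul (by positivity : ((2:ℚ)^(2*m+2)) ≠ 0),
      degree_comp_linear (fE m) (2*m+3) (fE_degree m) 2⁻¹ 0 (by norm_num)]
  · rw [Qm, degree_comp_linear (gE m) (2*m+3) (gE_degree m) 2⁻¹ (-(2⁻¹)) (by norm_num)]
  · intro x
    rw [Pm]
    simp only [Polynomial.eval_mul, Polynomial.eval_C, Polynomial.eval_comp,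
      Polynomial.eval_add, Polynomial.eval_X]
    rw [show (2⁻¹:ℚ) * -x + 0 = -((2⁻¹:ℚ) * x + 0) by ring, fE_odd m]
    ring
  · intro x
    rw [Qm]
    simp only [Polynomial.eval_mul, Polynomial.eval_C, Polynomial.eval_comp,
      Polynomial.eval_add, Polynomial.eval_X]
    rw [show (2⁻¹:ℚ) * -x + -(2⁻¹:ℚ) = -1 - ((2⁻¹:ℚ) * x + -(2⁻¹:ℚ)) by ring, gE_refl m]
  · intro k hk
    obtain ⟨n, rfl⟩ := hk
    rw [sum_filter_eq, show (n+n)/2 = n by omega, even_sum_nat, even_eval]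
    rw [Pm]
    simp only [Polynomial.eval_mul, Polynomial.eval_C, Polynomial.eval_comp,
      Polynomial.eval_add, Polynomial.eval_X]
    push_cast
    rw [show (2⁻¹:ℚ) * ((n:ℚ)+(n:ℚ)) + 0 = (n:ℚ) by ring]
    simp only [fE, Polynomial.eval_sub, Polynomial.eval_mul, Polynomial.eval_X]
  · intro k hk
    obtain ⟨n, rfl⟩ := hk
    rw [sum_filter_eq, show (2*n+1)/2 = n by omega, odd_sum_nat, odd_eval]
    rw [Qm]
    simp only [Polynomial.eval_mul, Polynomial.eval_C, Polynomial.eval_comp,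
      Polynomial.eval_add, Polynomial.eval_X]
    push_cast
    rw [show (2⁻¹:ℚ) * (2*(n:ℚ)+1) + -(2⁻¹:ℚ) = (n:ℚ) by ring]
    simp only [gE, Polynomial.eval_mul, Polynomial.eval_C, Polynomial.eval_sub,
      Polynomial.eval_X]
end

section
/- For every even natural number k, 120 times the sum of n-bar(p) * p^2 * q over all pairs of natural numbers (p, q) with p + q = k and q even equals 3*k^5 - 20*k^3 + 32*k, where n-bar(p) = p if p > 0 and n-bar(0) = 1. -/
open Finset

lemma psum1 (n : ℕ) : (∑ j ∈ range n, (j:ℤ)) * 2 = n * (n - 1) := by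
  induction n with
  | zero => simp
  | succ n ih => rw [sum_range_succ]; push_cast [Nat.cast_succ] at *; ring_nf; ring_nf at ih; linarith

lemma psum2 (n : ℕ) : (∑ j ∈ range n, (j:ℤ)^2) * 6 = n * (n - 1) * (2*n - 1) := by
  induction n with
  | zero => simp
  | succ n ih => rw [sum_range_succ]; push_cast at *; ring_nf; ring_nf at ih; linarith

lemma psum3 (n : ℕ) : (∑ j ∈ range n, (j:ℤ)^3) * 4 = (n:ℤ)^2 * (n - 1)^2 := by
  induction n with
  | zero => simp
  | succ n ih => rw [sum_range_succ]; push_cast at *; ring_nf; ring_nf at ih; linarith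

lemma psum4 (n : ℕ) : (∑ j ∈ range n, (j:ℤ)^4) * 30 = n * (n - 1) * (2*n - 1) * (3*(n:ℤ)^2 - 3*n - 1) := by
  induction n with
  | zero => simp
  | succ n ih => rw [sum_range_succ]; push_cast at *; ring_nf; ring_nf at ih; linarith

lemma key (m : ℕ) :
    (120 : ℤ) * ∑ j ∈ range (m+1), ((2*m:ℤ) - 2*j)^3 * (2*j) =
      3 * (2*(m:ℤ))^5 - 20 * (2*(m:ℤ))^3 + 32 * (2*(m:ℤ)) := by
  have hs : ∑ j ∈ range (m+1), ((2*m:ℤ) - 2*j)^3 * (2*j) =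
      16*(m:ℤ)^3 * (∑ j ∈ range (m+1), (j:ℤ))
      - 48*(m:ℤ)^2 * (∑ j ∈ range (m+1), (j:ℤ)^2)
      + 48*(m:ℤ) * (∑ j ∈ range (m+1), (j:ℤ)^3)
      - 16 * (∑ j ∈ range (m+1), (j:ℤ)^4) := by
    simp only [mul_sum]
    rw [← sum_sub_distrib, ← sum_add_distrib, ← sum_sub_distrib]
    exact sum_congr rfl fun j _ => by ring
  rw [hs]
  have h1 := psum1 (m+1)
  have h2 := psum2 (m+1)
  have h3 := psum3 (m+1)
  have h4 := psum4 (m+1)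
  push_cast at h1 h2 h3 h4
  linear_combination 960*(m:ℤ)^3*h1 - 960*(m:ℤ)^2*h2 + 1440*(m:ℤ)*h3 - 64*h4

/-- Closed form for `A_1(k)` for even `k`:
`120 * ∑_{p+q=k, q even} n̄(p) p^2 q = 3k^5 - 20k^3 + 32k`, where `n̄(0)=1, n̄(p)=p`. -/
theorem A_one_even (k : ℕ) (hk : Even k) :
    (120 : ℤ) * ∑ x ∈ (Finset.HasAntidiagonal.antidiagonal k).filter (fun x => Even x.2),
        (if x.1 = 0 then 1 else (x.1 : ℤ)) * (x.1 : ℤ) ^ 2 * x.2 =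
      3 * (k : ℤ) ^ 5 - 20 * (k : ℤ) ^ 3 + 32 * k := by
  obtain ⟨m, rfl⟩ := hk
  have hk2 : m + m = 2 * m := by ring
  rw [hk2]
  have hbij : ∑ x ∈ (Finset.HasAntidiagonal.antidiagonal (2*m)).filter (fun x => Even x.2),
      (if x.1 = 0 then 1 else (x.1 : ℤ)) * (x.1 : ℤ) ^ 2 * x.2 =
      ∑ j ∈ range (m+1), ((2*m:ℤ) - 2*j)^3 * (2*j) := by
    refine sum_nbij' (fun x => x.2 / 2) (fun j => (2*m - 2*j, 2*j)) ?_ ?_ ?_ ?_ ?_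
    · intro x hx
      simp only [mem_filter, Finset.HasAntidiagonal.mem_antidiagonal] at hx
      obtain ⟨hsum, j, hj⟩ := hx
      simp only [mem_range]
      omega
    · intro j hj
      simp only [mem_range] at hj
      simp only [mem_filter, Finset.HasAntidiagonal.mem_antidiagonal]
      constructor
      · omega
      · exact ⟨j, by ring⟩
    · intro x hx
      simp only [mem_filter, Finset.HasAntidiagonal.mem_antidiagonal] at hx
      obtain ⟨hsum, j, hj⟩ := hx
      ext <;> simp <;> omega
    · intro j hj
      simp only [mem_range] at hj
      dsimp only
      omega
    · intro x hx
      simp only [mem_filter, Finset.HasAntidiagonal.mem_antidiagonal] at hx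
      obtain ⟨hsum, j, hj⟩ := hx
      have hx2 : x.2 / 2 = j := by omega
      rw [hx2]
      by_cases h0 : x.1 = 0
      · have : j = m := by omega
        simp [h0, this]
      · have hx1 : (x.1 : ℤ) = 2*(m:ℤ) - 2*j := by
          have : x.1 = 2*m - 2*j := by omega
          rw [this]; push_cast [Nat.cast_sub (by omega : 2*j ≤ 2*m)]; ring
        simp [h0, hx1]
        push_cast [hj]
        ring
  rw [hbij, key]
  push_cast
  ring
end
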